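/- arXiv:1411.5808 — 4 statements merged into one kernel-verified Lean document; each statement's English description precedes it below -/
import Mathlib

section
/- Let c ∈ ℝ and let X : ℝ → ℝ be a function satisfying: (i) for every τ ≥ 0, sup{|X(t) − X(s)| : t,s ∈ ℝ, |t − s| ≤ τ} < +∞; (ii) X(t)/t → c as t → +∞; (iii) there is a constant K ≥ 0 such that for every τ > 0, limsup_{t→+∞} |X(t+τ) − X(t) − cτ| ≤ K. Then lim_{τ→+∞} sup_{t≥0} |(X(t+τ) − X(t))/τ − c| = 0. -/
open Real Filter Set MeasureTheory

/-- Time derivative of `u` at `(t,x)`. -/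
noncomputable def dT (u : ℝ → ℝ → ℝ) (t x : ℝ) : ℝ := deriv (fun s => u s x) t

/-- First space derivative of `u` at `(t,x)`. -/
noncomputable def dX (u : ℝ → ℝ → ℝ) (t x : ℝ) : ℝ := deriv (fun y => u t y) x

/-- Second space derivative of `u` at `(t,x)`. -/
noncomputable def dXX (u : ℝ → ℝ → ℝ) (t x : ℝ) : ℝ := deriv (deriv (fun y => u t y)) x

/-- `u` is a classical (time-global) solution of `u_t = u_xx + f(t,u)` on `ℝ × ℝ`. -/
def SolPDE (f u : ℝ → ℝ → ℝ) : Prop :=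
  ∀ t x : ℝ,
    DifferentiableAt ℝ (fun s => u s x) t ∧
    DifferentiableAt ℝ (fun y => u t y) x ∧
    DifferentiableAt ℝ (deriv (fun y => u t y)) x ∧
    dT u t x = dXX u t x + f t (u t x)

/-- The uniform-in-time limits defining a transition front connecting 0 and 1. -/
def FrontLimits (u : ℝ → ℝ → ℝ) (X : ℝ → ℝ) : Prop :=
  ∀ ε > (0:ℝ), ∃ M : ℝ, ∀ t x : ℝ,
    (x ≤ -M → |u t (X t + x) - 1| ≤ ε) ∧ (M ≤ x → |u t (X t + x)| ≤ ε)

/-- `u` is a transition front connecting 0 and 1 for `u_t = u_xx + f(t,u)`,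
with front position `X`. -/
def IsTransitionFront (f u : ℝ → ℝ → ℝ) (X : ℝ → ℝ) : Prop :=
  SolPDE f u ∧ (∀ t x : ℝ, u t x ∈ Icc (0:ℝ) 1) ∧ FrontLimits u X

/-- `u` has asymptotic past speed `c`. -/
def PastSpeed (X : ℝ → ℝ) (c : ℝ) : Prop :=
  Tendsto (fun t => X t / t) atBot (nhds c)

/-- `u` has asymptotic future speed `c`. -/
def FutureSpeed (X : ℝ → ℝ) (c : ℝ) : Prop :=
  Tendsto (fun t => X t / t) atTop (nhds c)

/-- Standing regularity assumptions: `f` is uniformly Hölder continuous on `ℝ × [0,1]`,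
of class `C¹` there, with bounded `∂f/∂u`. -/
def Reg (f : ℝ → ℝ → ℝ) : Prop :=
  (∃ α L : ℝ, α ∈ Ioc (0:ℝ) 1 ∧ 0 < L ∧
    ∀ t₁ t₂ v₁ v₂ : ℝ, v₁ ∈ Icc (0:ℝ) 1 → v₂ ∈ Icc (0:ℝ) 1 →
      |f t₁ v₁ - f t₂ v₂| ≤ L * (|t₁ - t₂| + |v₁ - v₂|) ^ α) ∧
  ContDiffOn ℝ 1 (fun p : ℝ × ℝ => f p.1 p.2) (univ ×ˢ Icc (0:ℝ) 1) ∧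
  (∃ M : ℝ, ∀ t : ℝ, ∀ v ∈ Icc (0:ℝ) 1, |deriv (f t) v| ≤ M)

/-- Hypothesis (H1). -/
def H1 (f : ℝ → ℝ → ℝ) : Prop :=
  (∀ t : ℝ, f t 0 = 0 ∧ f t 1 = 0) ∧
  (∀ t : ℝ, ∀ v ∈ Icc (0:ℝ) 1, 0 ≤ f t v) ∧
  (∀ t v w : ℝ, 0 < v → v ≤ w → w ≤ 1 → f t w / w ≤ f t v / v)

/-- Hypothesis (H2): limiting nonlinearities `fm = f₋`, `fp = f₊` with
`μm = f₋'(0) > 0`, `μp = f₊'(0) > 0`. -/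
def H2 (f : ℝ → ℝ → ℝ) (fm fp : ℝ → ℝ) (μm μp : ℝ) : Prop :=
  ContDiffOn ℝ 1 fm (Icc (0:ℝ) 1) ∧ ContDiffOn ℝ 1 fp (Icc (0:ℝ) 1) ∧
  fm 0 = 0 ∧ fm 1 = 0 ∧ fp 0 = 0 ∧ fp 1 = 0 ∧
  (∀ v ∈ Ioo (0:ℝ) 1, 0 < fm v) ∧ (∀ v ∈ Ioo (0:ℝ) 1, 0 < fp v) ∧
  (∀ ε > (0:ℝ), ∃ T : ℝ, ∀ t ≤ T, ∀ v ∈ Ioo (0:ℝ) 1, |f t v / fm v - 1| ≤ ε) ∧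
  (∀ ε > (0:ℝ), ∃ T : ℝ, ∀ t ≥ T, ∀ v ∈ Ioo (0:ℝ) 1, |f t v / fp v - 1| ≤ ε) ∧
  HasDerivWithinAt fm μm (Ici (0:ℝ)) 0 ∧ HasDerivWithinAt fp μp (Ici (0:ℝ)) 0 ∧
  0 < μm ∧ 0 < μp

/-- Hypothesis (H3). -/
def H3 (f : ℝ → ℝ → ℝ) : Prop :=
  ∃ C δ ω : ℝ, 0 < C ∧ δ ∈ Ioc (0:ℝ) 1 ∧ ω ∈ Ioc (0:ℝ) 1 ∧
    ∀ t : ℝ, ∀ v ∈ Ioo (0:ℝ) δ, deriv (f t) 0 * v - C * v ^ (1 + ω) ≤ f t v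

/-- Hypothesis (H4). -/
def H4 (f : ℝ → ℝ → ℝ) (fm : ℝ → ℝ) : Prop :=
  ∃ ζ : ℝ → ℝ, ContinuousOn ζ (Iio (0:ℝ)) ∧ IntegrableOn ζ (Iio (0:ℝ)) ∧
    ∀ t < (0:ℝ), ∀ s ∈ Ioo (0:ℝ) 1, |f t s / fm s - 1| ≤ ζ t

/-- Hypothesis (H5). -/
def H5 (f : ℝ → ℝ → ℝ) (fp : ℝ → ℝ) : Prop :=
  ∃ ζ : ℝ → ℝ, ContinuousOn ζ (Ioi (0:ℝ)) ∧ IntegrableOn ζ (Ioi (0:ℝ)) ∧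
    ∀ t > (0:ℝ), ∀ s ∈ Ioo (0:ℝ) 1, |f t s / fp s - 1| ≤ ζ t

/-- `φ` is a standard traveling front with speed `c` connecting 0 and 1 for the
homogeneous nonlinearity `g`, i.e. a decreasing solution of `φ'' + cφ' + g(φ) = 0`
with `φ(-∞) = 1`, `φ(+∞) = 0`. -/
def IsTravelingFront (g : ℝ → ℝ) (c : ℝ) (φ : ℝ → ℝ) : Prop :=
  (∀ x : ℝ, φ x ∈ Ioo (0:ℝ) 1) ∧ StrictAnti φ ∧
  (∀ x : ℝ, DifferentiableAt ℝ φ x ∧ DifferentiableAt ℝ (deriv φ) x ∧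
    deriv (deriv φ) x + c * deriv φ x + g (φ x) = 0) ∧
  Tendsto φ atBot (nhds 1) ∧ Tendsto φ atTop (nhds 0)

/-- `u(t, Y(t) + ·) → φ` in `C²(ℝ)` as `t → +∞`. -/
def C2ConvAtTop (u : ℝ → ℝ → ℝ) (Y : ℝ → ℝ) (φ : ℝ → ℝ) : Prop :=
  ∀ ε > (0:ℝ), ∃ T : ℝ, ∀ t ≥ T, ∀ x : ℝ,
    |u t (Y t + x) - φ x| ≤ ε ∧ |dX u t (Y t + x) - deriv φ x| ≤ ε ∧
    |dXX u t (Y t + x) - deriv (deriv φ) x| ≤ ε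

/-- `u(t, Y(t) + ·) → φ` in `C²(ℝ)` as `t → -∞`. -/
def C2ConvAtBot (u : ℝ → ℝ → ℝ) (Y : ℝ → ℝ) (φ : ℝ → ℝ) : Prop :=
  ∀ ε > (0:ℝ), ∃ T : ℝ, ∀ t ≤ T, ∀ x : ℝ,
    |u t (Y t + x) - φ x| ≤ ε ∧ |dX u t (Y t + x) - deriv φ x| ≤ ε ∧
    |dXX u t (Y t + x) - deriv (deriv φ) x| ≤ ε


lemma iter_bound (X : ℝ → ℝ) (c τ₁ K T₀ : ℝ) (hτ₁ : 0 ≤ τ₁)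
    (h : ∀ t ≥ T₀, |X (t + τ₁) - X t - c * τ₁| ≤ K) :
    ∀ n : ℕ, ∀ t ≥ T₀, |X (t + n * τ₁) - X t - c * (n * τ₁)| ≤ n * K := by
  intro n
  induction n with
  | zero => intro t ht; simp
  | succ n ih =>
    intro t ht
    have h1 := ih t ht
    have h2 := h (t + n * τ₁) (by nlinarith [Nat.cast_nonneg (α := ℝ) n])
    have key : t + ((n:ℝ)+1) * τ₁ = (t + (n:ℝ) * τ₁) + τ₁ := by ring
    push_cast
    calc |X (t + ((n:ℝ)+1) * τ₁) - X t - c * (((n:ℝ)+1) * τ₁)|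
        = |(X ((t + (n:ℝ)*τ₁) + τ₁) - X (t + (n:ℝ)*τ₁) - c*τ₁)
            + (X (t + (n:ℝ)*τ₁) - X t - c*((n:ℝ)*τ₁))| := by rw [key]; ring_nf
      _ ≤ |X ((t + (n:ℝ)*τ₁) + τ₁) - X (t + (n:ℝ)*τ₁) - c*τ₁|
            + |X (t + (n:ℝ)*τ₁) - X t - c*((n:ℝ)*τ₁)| := abs_add_le _ _
      _ ≤ K + (n:ℝ)*K := add_le_add h2 h1
      _ = ((n:ℝ)+1) * K := by ring

set_option maxHeartbeats 1000000 in
/-- the combinatorial lemma upgrading an asymptotic speed at `+∞` to a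
uniform asymptotic mean speed over `t ≥ 0`. -/
theorem stmt2 (X : ℝ → ℝ) (c : ℝ)
    (hosc : ∀ τ ≥ (0:ℝ), ∃ B : ℝ, ∀ t s : ℝ, |t - s| ≤ τ → |X t - X s| ≤ B)
    (hslope : Tendsto (fun t => X t / t) atTop (nhds c))
    (hK : ∃ K : ℝ, 0 ≤ K ∧ ∀ τ > (0:ℝ), ∀ ε > (0:ℝ), ∃ T : ℝ, ∀ t ≥ T,
        |X (t + τ) - X t - c * τ| ≤ K + ε) :
    ∀ ε > (0:ℝ), ∃ T : ℝ, ∀ τ ≥ T, ∀ t ≥ (0:ℝ),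
      |(X (t + τ) - X t) / τ - c| ≤ ε := by
  intro ε hε
  obtain ⟨K, hK0, hKprop⟩ := hK
  -- fixed step
  set τ₁ : ℝ := max 1 (4 * (K + 1) / ε) with hτ₁def
  have hτ₁1 : (1:ℝ) ≤ τ₁ := le_max_left _ _
  have hτ₁pos : 0 < τ₁ := lt_of_lt_of_le one_pos hτ₁1
  have hτ₁big : 4 * (K + 1) / ε ≤ τ₁ := le_max_right _ _
  have hstep : (K + 1) / τ₁ ≤ ε / 4 := by
    rw [div_le_iff₀ hτ₁pos]
    have h4 : 4 * (K + 1) / ε * (ε / 4) = K + 1 := by field_simp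
    nlinarith [mul_le_mul_of_nonneg_right hτ₁big (le_of_lt (by positivity : (0:ℝ) < ε / 4))]
  obtain ⟨T₀', hT₀'⟩ := hKprop τ₁ hτ₁pos 1 one_pos
  set T₀ : ℝ := max T₀' 0 with hT₀def
  have hT₀0 : 0 ≤ T₀ := le_max_right _ _
  have hstepbd : ∀ t ≥ T₀, |X (t + τ₁) - X t - c * τ₁| ≤ K + 1 := fun t ht =>
    hT₀' t (le_trans (le_max_left _ _) ht)
  obtain ⟨B₁, hB₁⟩ := hosc τ₁ hτ₁pos.le
  have hB₁0 : 0 ≤ B₁ := le_trans (abs_nonneg _) (hB₁ 0 0 (by simpa using hτ₁pos.le))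
  obtain ⟨B₂, hB₂⟩ := hosc T₀ hT₀0
  have hB₂0 : 0 ≤ B₂ := le_trans (abs_nonneg _) (hB₂ 0 0 (by simpa using hT₀0))
  have hC₁ex : ∃ C₁ : ℝ, 0 ≤ C₁ ∧ ∀ s, 0 ≤ s → s ≤ T₀ → |X s - c * s| ≤ C₁ := by
    refine ⟨B₂ + |X 0| + |c| * T₀, by positivity, fun s hs0 hsT => ?_⟩
    have h1 : |X s - X 0| ≤ B₂ := hB₂ s 0 (by rw [sub_zero, abs_of_nonneg hs0]; exact hsT)
    have h2 : |c * s| ≤ |c| * T₀ := by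
      rw [abs_mul]
      exact mul_le_mul_of_nonneg_left (by rw [abs_of_nonneg hs0]; exact hsT) (abs_nonneg c)
    have e : X s - c * s = ((X s - X 0) + X 0) + (-(c * s)) := by ring
    calc |X s - c * s| = |((X s - X 0) + X 0) + (-(c * s))| := by rw [e]
      _ ≤ |(X s - X 0) + X 0| + |(-(c * s))| := abs_add_le _ _
      _ ≤ (|X s - X 0| + |X 0|) + |c * s| := by rw [abs_neg]; gcongr; exact abs_add_le _ _
      _ ≤ B₂ + |X 0| + |c| * T₀ := by linarith
  obtain ⟨C₁, hC₁0, hC₁bd⟩ := hC₁ex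
  -- slope threshold
  rw [Metric.tendsto_atTop] at hslope
  obtain ⟨S', hS'⟩ := hslope (ε/4) (by positivity)
  refine ⟨max (max τ₁ (max S' 1)) (max (max T₀ (4*C₁/ε)) (4*(B₁+|c| * τ₁)/ε)), fun τ hτ t ht => ?_⟩
  have hττ₁ : τ₁ ≤ τ := le_trans (le_trans (le_max_left _ _) (le_max_left _ _)) hτ
  have hτ1 : (1:ℝ) ≤ τ := le_trans hτ₁1 hττ₁
  have hτpos : (0:ℝ) < τ := lt_of_lt_of_le one_pos hτ1
  have hτS' : S' ≤ τ := le_trans (le_trans (le_max_left _ _) (le_max_right _ _))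
    (le_trans (le_max_left _ _) hτ)
  have hτT₀ : T₀ ≤ τ := le_trans (le_trans (le_max_left _ _) (le_max_left _ _))
    (le_trans (le_max_right _ _) hτ)
  have hτC₁ : 4*C₁/ε ≤ τ := le_trans (le_trans (le_max_right _ _) (le_max_left _ _))
    (le_trans (le_max_right _ _) hτ)
  have hτB₁ : 4*(B₁+|c| * τ₁)/ε ≤ τ := le_trans (le_max_right _ _)
    (le_trans (le_max_right _ _) hτ)
  clear_value τ₁ T₀
  clear hτ hτ₁def hT₀def hτ₁big hKprop hosc hB₂ hB₂0
  have habs : (X (t + τ) - X t) / τ - c = (X (t + τ) - X t - c * τ) / τ := by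
    field_simp
  rw [habs, abs_div, abs_of_pos hτpos, div_le_iff₀ hτpos]
  rcases le_total T₀ t with hcase | hcase
  · -- regime 1 : t ≥ T₀, use iteration
    set n : ℕ := ⌊τ / τ₁⌋₊ with hndef
    have hdivpos : 0 ≤ τ / τ₁ := by positivity
    have hn1 : (n:ℝ) * τ₁ ≤ τ := by
      have := Nat.floor_le hdivpos
      calc (n:ℝ) * τ₁ ≤ (τ / τ₁) * τ₁ := by nlinarith
        _ = τ := by field_simp
    have hn2 : τ < ((n:ℝ) + 1) * τ₁ := by
      have := Nat.lt_floor_add_one (τ / τ₁)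
      calc τ = (τ / τ₁) * τ₁ := by field_simp
        _ < ((n:ℝ) + 1) * τ₁ := by nlinarith
    have hiter := iter_bound X c τ₁ (K+1) T₀ hτ₁pos.le hstepbd n t hcase
    clear_value n
    clear hndef
    have hosc1 : |X (t + τ) - X (t + (n:ℝ)*τ₁)| ≤ B₁ := by
      apply hB₁
      rw [abs_le]; constructor <;> nlinarith
    have habs2 : |τ - (n:ℝ)*τ₁| ≤ τ₁ := by
      rw [abs_le]; constructor <;> nlinarith
    have hthird : |c * (τ - (n:ℝ)*τ₁)| ≤ |c| * τ₁ := by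
      rw [abs_mul]
      exact mul_le_mul_of_nonneg_left habs2 (abs_nonneg c)
    have hsplit : X (t + τ) - X t - c * τ
        = (X (t + τ) - X (t + (n:ℝ)*τ₁)) + (X (t + (n:ℝ)*τ₁) - X t - c*((n:ℝ)*τ₁))
          + (-(c * (τ - (n:ℝ)*τ₁))) := by ring
    have hbd : |X (t + τ) - X t - c * τ| ≤ B₁ + (n:ℝ)*(K+1) + |c| * τ₁ := by
      rw [hsplit]
      calc _ ≤ |(X (t + τ) - X (t + (n:ℝ)*τ₁)) + (X (t + (n:ℝ)*τ₁) - X t - c*((n:ℝ)*τ₁))|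
              + |(-(c * (τ - (n:ℝ)*τ₁)))| := abs_add_le _ _
        _ ≤ |X (t + τ) - X (t + (n:ℝ)*τ₁)| + |X (t + (n:ℝ)*τ₁) - X t - c*((n:ℝ)*τ₁)|
              + |(-(c * (τ - (n:ℝ)*τ₁)))| := by gcongr; exact abs_add_le _ _
        _ ≤ B₁ + (n:ℝ)*(K+1) + |c| * τ₁ := by
            rw [abs_neg]; exact add_le_add (add_le_add hosc1 hiter) hthird
    -- n*(K+1) ≤ τ*(K+1)/τ₁ ≤ τ*ε/4
    have hK1 : (0:ℝ) ≤ K + 1 := by linarith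
    have hn3 : (n:ℝ)*(K+1) ≤ τ * ((K+1)/τ₁) := by
      rw [mul_div_assoc', le_div_iff₀ hτ₁pos]
      calc (n:ℝ)*(K+1)*τ₁ = (K+1)*((n:ℝ)*τ₁) := by ring
        _ ≤ (K+1)*τ := mul_le_mul_of_nonneg_left hn1 hK1
        _ = τ*(K+1) := by ring
    have h1 : (n:ℝ)*(K+1) ≤ ε/4 * τ := by
      calc (n:ℝ)*(K+1) ≤ τ * ((K+1)/τ₁) := hn3
        _ ≤ τ * (ε/4) := mul_le_mul_of_nonneg_left hstep hτpos.le
        _ = ε/4 * τ := by ring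
    have h2 : B₁ + |c| * τ₁ ≤ ε/4 * τ := by
      have h := mul_le_mul_of_nonneg_left hτB₁ (le_of_lt (by positivity : (0:ℝ) < ε/4))
      have he : ε/4 * (4*(B₁+|c| * τ₁)/ε) = B₁ + |c| * τ₁ := by field_simp
      rw [he] at h; exact h
    have hετ : 0 ≤ ε * τ := by positivity
    calc |X (t + τ) - X t - c * τ| ≤ B₁ + (n:ℝ)*(K+1) + |c| * τ₁ := hbd
      _ ≤ ε/4 * τ + ε/4 * τ := by linarith
      _ ≤ ε * τ := by linarith
  · -- regime 2 : 0 ≤ t ≤ T₀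
    have hs : t + τ ≥ S' := by linarith
    have hspos : (0:ℝ) < t + τ := by linarith
    have hsl := hS' (t + τ) hs
    rw [Real.dist_eq] at hsl
    have hsl2 : |X (t + τ) - c * (t + τ)| ≤ ε/4 * (t + τ) := by
      have : |X (t + τ) / (t + τ) - c| * (t + τ) ≤ ε/4 * (t + τ) :=
        mul_le_mul_of_nonneg_right hsl.le hspos.le
      have heq : X (t + τ) - c * (t + τ) = (X (t + τ) / (t + τ) - c) * (t + τ) := by
        field_simp
      rw [heq, abs_mul, abs_of_pos hspos]
      exact this
    have hXt : |X t - c * t| ≤ C₁ := hC₁bd t ht hcase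
    have hsplit : X (t + τ) - X t - c * τ
        = (X (t + τ) - c * (t + τ)) + (-(X t - c * t)) := by ring
    have hbd : |X (t + τ) - X t - c * τ| ≤ ε/4 * (t + τ) + C₁ := by
      rw [hsplit]
      calc _ ≤ |X (t + τ) - c * (t + τ)| + |(-(X t - c * t))| := abs_add_le _ _
        _ ≤ ε/4 * (t + τ) + C₁ := by rw [abs_neg]; exact add_le_add hsl2 hXt
    have hC₁τ : C₁ ≤ ε/4 * τ := by
      have h := mul_le_mul_of_nonneg_left hτC₁ (le_of_lt (by positivity : (0:ℝ) < ε/4))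
      have he : ε/4 * (4*C₁/ε) = C₁ := by field_simp
      rw [he] at h; exact h
    have htT : t + τ ≤ T₀ + τ := by linarith
    have hmono1 : ε/4 * (t + τ) ≤ ε/4 * (T₀ + τ) :=
      mul_le_mul_of_nonneg_left htT (by positivity)
    have hmono2 : ε/4 * T₀ ≤ ε/4 * τ :=
      mul_le_mul_of_nonneg_left hτT₀ (by positivity)
    have hετ : 0 ≤ ε * τ := by positivity
    calc |X (t + τ) - X t - c * τ| ≤ ε/4 * (t + τ) + C₁ := hbd
      _ ≤ ε/4 * (T₀ + τ) + ε/4 * τ := by linarith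
      _ = ε/4 * T₀ + ε/4 * τ + ε/4 * τ := by ring
      _ ≤ ε/4 * τ + ε/4 * τ + ε/4 * τ := by linarith
      _ ≤ ε * τ := by linarith
end

section
/- Let f : ℝ × [0,1] → ℝ be continuous, C¹ in u, with f(t,0) = f(t,1) = 0 for all t. Let f₋ : [0,1] → ℝ be C¹ with f₋(0) = f₋(1) = 0, μ₋ := f₋′(0), and such that s ↦ f₋(s)/s is nonincreasing on (0,1]. Let ζ : ℝ → [0,+∞) be continuous and satisfy (1 − ζ(t))·f₋(s) ≤ f(t,s) ≤ (1 + ζ(t))·f₋(s) for all t ∈ ℝ and s ∈ [0,1]. Fix T ∈ ℝ, let u be a classical solution of u_t = u_xx + f(t,u) on [T,+∞) × ℝ with 0 < u < 1, and let v be a classical solution of v_t = v_xx + f₋(v) on (T,+∞) × ℝ with 0 ≤ v ≤ 1 and initial condition v(T,·) = u(T,·). Then for all t ≥ T and x ∈ ℝ: u(t,x)·exp(−μ₋·∫_T^t ζ(τ)dτ) ≤ v(t,x) ≤ u(t,x)·exp(μ₋·∫_T^t ζ(τ)dτ). -/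
open Real Filter Set MeasureTheory

/-!
Both bounds are instances of the comparison principle for `v_t = v_xx + f₋(v)`. Write
`Θ(t) = ∫_T^t ζ`. Because `f₋(s)/s` is nonincreasing, `f₋(s) ≤ μ₋ s` and `f₋` is sub-homogeneous
(`c f₋(s) ≤ f₋(c s)` for `c ≤ 1`, the reverse for `c ≥ 1`); together with the sandwich on `f`,
this makes `u e^{-μ₋Θ}` a subsolution and `u e^{μ₋Θ}` a supersolution of the homogeneous equation,
both equal to `v` at time `T`. The comparison principle reduces, for the difference `w`, to a weak
maximum principle on the strip `[T, t₀] × ℝ`: if `w` ever went negative, the function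
`w + ε (1 + x²) e^{λ(t - T)}` with `λ > K` would have a first zero, where `∂ₜ ≤ 0 ≤ ∂ₓₓ`
contradicts the differential inequality.
-/

open Topology NNReal

def ParabolicDifferentiableAt (u : ℝ → ℝ → ℝ) (t : ℝ) : Prop :=
  ∀ x : ℝ, DifferentiableAt ℝ (fun s => u s x) t ∧ DifferentiableAt ℝ (fun y => u t y) x ∧
    DifferentiableAt ℝ (deriv fun y => u t y) x

namespace ParabolicDifferentiableAt

variable {u w : ℝ → ℝ → ℝ} {E : ℝ → ℝ} {t : ℝ}

theorem add (hu : ParabolicDifferentiableAt u t) (hw : ParabolicDifferentiableAt w t) :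
    ParabolicDifferentiableAt (fun s y => u s y + w s y) t := fun x => by
  have hd : (deriv fun y => u t y + w t y) = fun y => deriv (u t ·) y + deriv (w t ·) y :=
    funext fun y => deriv_add (hu y).2.1 (hw y).2.1
  exact ⟨(hu x).1.add (hw x).1, (hu x).2.1.add (hw x).2.1, hd ▸ (hu x).2.2.add (hw x).2.2⟩

theorem sub (hu : ParabolicDifferentiableAt u t) (hw : ParabolicDifferentiableAt w t) :
    ParabolicDifferentiableAt (fun s y => u s y - w s y) t := fun x => by
  have hd : (deriv fun y => u t y - w t y) = fun y => deriv (u t ·) y - deriv (w t ·) y :=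
    funext fun y => deriv_sub (hu y).2.1 (hw y).2.1
  exact ⟨(hu x).1.sub (hw x).1, (hu x).2.1.sub (hw x).2.1, hd ▸ (hu x).2.2.sub (hw x).2.2⟩

theorem mul_weight (hu : ParabolicDifferentiableAt u t) (hE : DifferentiableAt ℝ E t) :
    ParabolicDifferentiableAt (fun s y => u s y * E s) t := fun x => by
  have hd : (deriv fun y => u t y * E t) = fun y => deriv (u t ·) y * E t :=
    funext fun y => deriv_mul_const (hu y).2.1 _
  exact ⟨(hu x).1.mul hE, (hu x).2.1.mul_const _, hd ▸ (hu x).2.2.mul_const _⟩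

theorem dT_add (hu : ParabolicDifferentiableAt u t) (hw : ParabolicDifferentiableAt w t)
    (x : ℝ) : dT (fun s y => u s y + w s y) t x = dT u t x + dT w t x :=
  deriv_add (hu x).1 (hw x).1

theorem dT_sub (hu : ParabolicDifferentiableAt u t) (hw : ParabolicDifferentiableAt w t)
    (x : ℝ) : dT (fun s y => u s y - w s y) t x = dT u t x - dT w t x :=
  deriv_sub (hu x).1 (hw x).1

theorem dT_mul_weight (hu : ParabolicDifferentiableAt u t) (hE : DifferentiableAt ℝ E t)
    (x : ℝ) : dT (fun s y => u s y * E s) t x = dT u t x * E t + u t x * deriv E t :=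
  deriv_mul (hu x).1 hE

theorem dXX_add (hu : ParabolicDifferentiableAt u t) (hw : ParabolicDifferentiableAt w t)
    (x : ℝ) : dXX (fun s y => u s y + w s y) t x = dXX u t x + dXX w t x := by
  have hd : (deriv fun y => u t y + w t y) = fun y => deriv (u t ·) y + deriv (w t ·) y :=
    funext fun y => deriv_add (hu y).2.1 (hw y).2.1
  simp only [dXX, hd]
  exact deriv_add (hu x).2.2 (hw x).2.2

theorem dXX_sub (hu : ParabolicDifferentiableAt u t) (hw : ParabolicDifferentiableAt w t)
    (x : ℝ) : dXX (fun s y => u s y - w s y) t x = dXX u t x - dXX w t x := by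
  have hd : (deriv fun y => u t y - w t y) = fun y => deriv (u t ·) y - deriv (w t ·) y :=
    funext fun y => deriv_sub (hu y).2.1 (hw y).2.1
  simp only [dXX, hd]
  exact deriv_sub (hu x).2.2 (hw x).2.2

theorem dXX_mul_weight (hu : ParabolicDifferentiableAt u t) (x : ℝ) :
    dXX (fun s y => u s y * E s) t x = dXX u t x * E t := by
  have hd : (deriv fun y => u t y * E t) = fun y => deriv (u t ·) y * E t :=
    funext fun y => deriv_mul_const (hu y).2.1 _
  simp only [dXX, hd]
  exact deriv_mul_const (hu x).2.2 _

end ParabolicDifferentiableAt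

theorem deriv_deriv_nonneg_of_isLocalMin {g : ℝ → ℝ} {x : ℝ} (hmin : IsLocalMin g x)
    (hc : ContinuousAt g x) : 0 ≤ deriv (deriv g) x := by
  by_contra! hneg
  have hmax := isLocalMax_of_deriv_deriv_neg hneg hmin.deriv_eq_zero hc
  have hconst : g =ᶠ[𝓝 x] fun _ => g x :=
    (hmin.and hmax).mono fun y hy => le_antisymm hy.2 hy.1
  have hflat : deriv g =ᶠ[𝓝 x] fun _ => 0 := by
    simpa using hconst.deriv
  simp [hflat.deriv_eq] at hneg

theorem deriv_nonpos_of_eq_zero_of_nonneg_Ico {g : ℝ → ℝ} {a t : ℝ} (hat : a < t)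
    (hg : DifferentiableAt ℝ g t) (hpos : ∀ s ∈ Ico a t, 0 ≤ g s) (hzero : g t = 0) :
    deriv g t ≤ 0 := by
  refine le_of_tendsto (hasDerivAt_iff_tendsto_slope_left_right.1 hg.hasDerivAt).1 ?_
  filter_upwards [Ioo_mem_nhdsLT hat] with s hs
  rw [slope_def_field, hzero, sub_zero]
  exact div_nonpos_of_nonneg_of_nonpos (hpos s ⟨hs.1.le, hs.2⟩) (sub_nonpos.2 hs.2.le)

theorem exists_first_zero_of_continuousOn {φ : ℝ → ℝ → ℝ} {T t0 a b : ℝ}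
    (hφ : ContinuousOn (fun p : ℝ × ℝ => φ p.1 p.2) (Icc T t0 ×ˢ univ))
    (hinit : ∀ x, 0 < φ T x) (hfar : ∀ t ∈ Icc T t0, ∀ x ∉ Icc a b, 0 < φ t x)
    {t1 x1 : ℝ} (ht1 : t1 ∈ Icc T t0) (hφ1 : φ t1 x1 ≤ 0) :
    ∃ ts ∈ Ioc T t0, ∃ xs, φ ts xs = 0 ∧ (∀ x, 0 ≤ φ ts x) ∧
      ∀ s ∈ Ico T ts, ∀ x, 0 < φ s x := by
  set S := (Icc T t0 ×ˢ Icc a b) ∩ (fun p : ℝ × ℝ => φ p.1 p.2) ⁻¹' Iic 0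
  have hS : IsCompact S :=
    (isCompact_Icc.prod isCompact_Icc).of_isClosed_subset
      ((hφ.mono (prod_mono_right (subset_univ _))).preimage_isClosed_of_isClosed
        (isClosed_Icc.prod isClosed_Icc) isClosed_Iic) inter_subset_left
  have hmem : ∀ t ∈ Icc T t0, ∀ x, φ t x ≤ 0 → (t, x) ∈ S := fun t ht x hx =>
    ⟨⟨ht, by_contra fun h => (hfar t ht x h).not_ge hx⟩, hx⟩
  obtain ⟨⟨ts, xs⟩, ⟨⟨hts, -⟩, hxs⟩, hmin⟩ :=
    hS.exists_isMinOn ⟨_, hmem t1 ht1 x1 hφ1⟩ continuous_fst.continuousOn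
  have hbefore : ∀ s ∈ Ico T ts, ∀ x, 0 < φ s x := fun s hs x => not_le.1 fun h =>
    hs.2.not_ge (hmin (hmem s ⟨hs.1, hs.2.le.trans hts.2⟩ x h))
  have hTts : T < ts := lt_of_le_of_ne hts.1 fun h => (hinit xs).not_ge (h ▸ hxs)
  have hnonneg : ∀ x, 0 ≤ φ ts x := fun x => by
    have hc : ContinuousOn (fun s => φ s x) (Icc T t0) :=
      hφ.comp (continuous_id.prodMk continuous_const).continuousOn fun s hs => ⟨hs, mem_univ x⟩
    exact ContinuousWithinAt.closure_le (f := fun _ => 0) (g := fun s => φ s x)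
      (closure_Ico hTts.ne ▸ right_mem_Icc.2 hTts.le) continuousWithinAt_const
      ((hc ts hts).mono (Ico_subset_Icc_self.trans (Icc_subset_Icc_right hts.2)))
      fun s hs => (hbefore s hs x).le
  exact ⟨ts, ⟨hTts, hts.2⟩, xs, le_antisymm hxs (hnonneg xs), hnonneg, hbefore⟩

noncomputable def barrier (ε lam T t x : ℝ) : ℝ := ε * (1 + x ^ 2) * exp (lam * (t - T))

section barrier

variable {ε lam T t : ℝ}

theorem hasDerivAt_barrier_time (x : ℝ) :
    HasDerivAt (fun s => barrier ε lam T s x) (lam * barrier ε lam T t x) t := by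
  have h := (((hasDerivAt_id' t).sub_const T).const_mul lam).exp.const_mul (ε * (1 + x ^ 2))
  unfold barrier
  exact h.congr_deriv (by ring)

theorem deriv_barrier_space :
    (deriv fun y => barrier ε lam T t y) = fun y => 2 * ε * exp (lam * (t - T)) * y := by
  funext y
  have h := (((hasDerivAt_pow 2 y).const_add 1).const_mul ε).mul_const (exp (lam * (t - T)))
  unfold barrier
  rw [h.deriv]
  push_cast
  ring

theorem parabolicDifferentiableAt_barrier : ParabolicDifferentiableAt (barrier ε lam T) t :=
  fun x => ⟨(hasDerivAt_barrier_time x).differentiableAt,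
    by unfold barrier; fun_prop, by rw [deriv_barrier_space]; fun_prop⟩

theorem dT_barrier (x : ℝ) : dT (barrier ε lam T) t x = lam * barrier ε lam T t x :=
  (hasDerivAt_barrier_time x).deriv

theorem dXX_barrier (x : ℝ) : dXX (barrier ε lam T) t x = 2 * ε * exp (lam * (t - T)) := by
  simp [dXX, deriv_barrier_space]

theorem barrier_pos (hε : 0 < ε) (x : ℝ) : 0 < barrier ε lam T t x := by
  unfold barrier; positivity

theorem mul_exp_le_barrier (hε : 0 ≤ ε) (x : ℝ) :
    ε * exp (lam * (t - T)) ≤ barrier ε lam T t x := by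
  unfold barrier
  have := exp_pos (lam * (t - T))
  nlinarith [sq_nonneg x, mul_nonneg hε this.le]

theorem lt_barrier_of_abs_gt (B : ℝ) (hε : 0 < ε) (hlam : 0 ≤ lam) (ht : T ≤ t)
    {x : ℝ} (hx : |B| / ε + 1 < |x|) : B < barrier ε lam T t x := by
  have hsq : |B| / ε < x ^ 2 := by nlinarith [sq_abs x, div_nonneg (abs_nonneg B) hε.le]
  have hexp : 1 ≤ exp (lam * (t - T)) := one_le_exp (mul_nonneg hlam (sub_nonneg.2 ht))
  unfold barrier
  nlinarith [(div_lt_iff₀ hε).1 hsq, le_abs_self B, mul_le_mul_of_nonneg_left hexp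
    (by positivity : 0 ≤ ε * (1 + x ^ 2))]

end barrier

theorem nonneg_of_parabolic_supersolution {w : ℝ → ℝ → ℝ} {K B T t0 : ℝ} (hT : T ≤ t0)
    (hw : ContinuousOn (fun p : ℝ × ℝ => w p.1 p.2) (Icc T t0 ×ˢ univ))
    (hB : ∀ t ∈ Icc T t0, ∀ x, -B ≤ w t x) (hinit : ∀ x, 0 ≤ w T x)
    (hdiff : ∀ t ∈ Ioc T t0, ParabolicDifferentiableAt w t)
    (hsuper : ∀ t ∈ Ioc T t0, ∀ x, w t x < 0 → dXX w t x + K * w t x ≤ dT w t x) (x : ℝ) :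
    0 ≤ w t0 x := by
  by_contra! hx
  set lam := |K| + 3
  set ε := -w t0 x / (2 * ((1 + x ^ 2) * exp (lam * (t0 - T))))
  have hε : 0 < ε := div_pos (neg_pos.2 hx) (by positivity)
  have hbar_x : barrier ε lam T t0 x = -w t0 x / 2 := by
    unfold barrier ε
    field_simp
  set φ := fun t y => w t y + barrier ε lam T t y
  have hφc : ContinuousOn (fun p : ℝ × ℝ => φ p.1 p.2) (Icc T t0 ×ˢ univ) :=
    hw.add (Continuous.continuousOn (by unfold barrier; fun_prop))
  have hfar : ∀ t ∈ Icc T t0, ∀ y ∉ Icc (-(|B| / ε + 1)) (|B| / ε + 1), 0 < φ t y :=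
    fun t ht y hy => by
      have := lt_barrier_of_abs_gt (lam := lam) B hε (by positivity : (0:ℝ) ≤ |K| + 3) ht.1
        (not_le.1 fun h => hy (abs_le.1 h))
      linarith [hB t ht y, neg_abs_le B]
  obtain ⟨ts, hts, xs, hzero, hmin, hbefore⟩ := exists_first_zero_of_continuousOn hφc
    (fun y => add_pos_of_nonneg_of_pos (hinit y) (barrier_pos hε y)) hfar
    ⟨hT, le_rfl⟩ (by simp only [φ]; linarith)
  have hwd := hdiff ts hts
  have hbd : ParabolicDifferentiableAt (barrier ε lam T) ts := parabolicDifferentiableAt_barrier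
  have hxx : 0 ≤ dXX φ ts xs :=
    deriv_deriv_nonneg_of_isLocalMin
      ((isMinOn_univ_iff.2 fun y => hzero ▸ hmin y).isLocalMin univ_mem)
      ((hwd.add hbd) xs).2.1.continuousAt
  have htt : dT φ ts xs ≤ 0 := deriv_nonpos_of_eq_zero_of_nonneg_Ico hts.1
    ((hwd.add hbd) xs).1 (fun s hs => (hbefore s hs xs).le) hzero
  rw [hwd.dXX_add hbd, dXX_barrier] at hxx
  rw [hwd.dT_add hbd, dT_barrier] at htt
  have hwneg : w ts xs = -barrier ε lam T ts xs := eq_neg_of_add_eq_zero_left hzero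
  have hpos : 0 < barrier ε lam T ts xs := barrier_pos hε xs
  have hsup := hsuper ts hts xs (by linarith)
  rw [hwneg] at hsup
  nlinarith [mul_exp_le_barrier (lam := lam) (T := T) (t := ts) hε.le xs,
    mul_pos hε (exp_pos (lam * (ts - T))), mul_nonneg (sub_nonneg.2 (le_abs_self K)) hpos.le]

theorem le_of_parabolic_comparison {g : ℝ → ℝ} {K : ℝ≥0} (hg : LipschitzOnWith K g (Icc 0 1))
    {a b : ℝ → ℝ → ℝ} {T t0 : ℝ} (hT : T ≤ t0)
    (ha : ContinuousOn (fun p : ℝ × ℝ => a p.1 p.2) (Icc T t0 ×ˢ univ))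
    (hb : ContinuousOn (fun p : ℝ × ℝ => b p.1 p.2) (Icc T t0 ×ˢ univ))
    (ha1 : ∀ t ∈ Icc T t0, ∀ x, a t x ≤ 1) (hb0 : ∀ t ∈ Icc T t0, ∀ x, 0 ≤ b t x)
    (hinit : ∀ x, a T x ≤ b T x)
    (ha_diff : ∀ t ∈ Ioc T t0, ParabolicDifferentiableAt a t)
    (hb_diff : ∀ t ∈ Ioc T t0, ParabolicDifferentiableAt b t)
    (hab : ∀ t ∈ Ioc T t0, ∀ x, b t x < a t x →
      dT a t x - dXX a t x - g (a t x) ≤ dT b t x - dXX b t x - g (b t x)) (x : ℝ) :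
    a t0 x ≤ b t0 x := by
  refine sub_nonneg.1 (nonneg_of_parabolic_supersolution (w := fun t y => b t y - a t y)
    (K := K) (B := 1) hT (hb.sub ha) (fun t ht y => by linarith [ha1 t ht y, hb0 t ht y])
    (fun y => sub_nonneg.2 (hinit y)) (fun t ht => (hb_diff t ht).sub (ha_diff t ht)) ?_ x)
  intro t ht y hneg
  have hlt : b t y < a t y := sub_neg.1 hneg
  have hlip : g (a t y) - g (b t y) ≤ K * (a t y - b t y) := by
    have := hg.dist_le_mul (a t y) ⟨(hb0 t (Ioc_subset_Icc_self ht) y).trans hlt.le,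
      ha1 t (Ioc_subset_Icc_self ht) y⟩ (b t y) ⟨hb0 t (Ioc_subset_Icc_self ht) y,
      hlt.le.trans (ha1 t (Ioc_subset_Icc_self ht) y)⟩
    rw [Real.dist_eq, Real.dist_eq, abs_of_pos (sub_pos.2 hlt)] at this
    exact (le_abs_self _).trans this
  rw [(hb_diff t ht).dXX_sub (ha_diff t ht), (hb_diff t ht).dT_sub (ha_diff t ht)]
  linarith [hab t ht y hlt]

def IsSolutionAfter (g : ℝ → ℝ → ℝ) (T : ℝ) (u : ℝ → ℝ → ℝ) : Prop :=
  ∀ t : ℝ, T < t → ∀ x : ℝ,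
    DifferentiableAt ℝ (fun s => u s x) t ∧ DifferentiableAt ℝ (fun y => u t y) x ∧
      DifferentiableAt ℝ (deriv fun y => u t y) x ∧ dT u t x = dXX u t x + g t (u t x)

namespace IsSolutionAfter

variable {f : ℝ → ℝ → ℝ} {g E : ℝ → ℝ} {T t t0 : ℝ} {u v : ℝ → ℝ → ℝ}

theorem parabolicDifferentiableAt (hu : IsSolutionAfter f T u) (ht : T < t) :
    ParabolicDifferentiableAt u t :=
  fun x => ⟨(hu t ht x).1, (hu t ht x).2.1, (hu t ht x).2.2.1⟩

theorem dT_sub_dXX (hu : IsSolutionAfter f T u) (ht : T < t) (x : ℝ) :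
    dT u t x - dXX u t x = f t (u t x) := by
  linarith [(hu t ht x).2.2.2]

theorem dT_sub_dXX_mul_weight (hu : IsSolutionAfter f T u) (ht : T < t)
    (hE : DifferentiableAt ℝ E t) (x : ℝ) :
    dT (fun s y => u s y * E s) t x - dXX (fun s y => u s y * E s) t x =
      E t * f t (u t x) + u t x * deriv E t := by
  rw [(hu.parabolicDifferentiableAt ht).dT_mul_weight hE,
    (hu.parabolicDifferentiableAt ht).dXX_mul_weight, (hu t ht x).2.2.2]
  ring

variable {K : ℝ≥0}

theorem mul_weight_le_of_subsolution (hu : IsSolutionAfter f T u)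
    (hv : IsSolutionAfter (fun _ => g) T v) (hg : LipschitzOnWith K g (Icc 0 1)) (hT : T ≤ t0)
    (hu_cont : ContinuousOn (fun p : ℝ × ℝ => u p.1 p.2) (Icc T t0 ×ˢ univ))
    (hv_cont : ContinuousOn (fun p : ℝ × ℝ => v p.1 p.2) (Icc T t0 ×ˢ univ))
    (hE : Differentiable ℝ E) (huE1 : ∀ t ∈ Icc T t0, ∀ x, u t x * E t ≤ 1)
    (hv0 : ∀ t ∈ Icc T t0, ∀ x, 0 ≤ v t x) (hinit : ∀ x, u T x * E T ≤ v T x)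
    (hsub : ∀ t ∈ Ioc T t0, ∀ x, E t * f t (u t x) + u t x * deriv E t ≤ g (u t x * E t))
    (x : ℝ) : u t0 x * E t0 ≤ v t0 x :=
  le_of_parabolic_comparison (a := fun t y => u t y * E t) hg hT
    (hu_cont.mul (hE.continuous.comp continuous_fst).continuousOn) hv_cont huE1 hv0 hinit
    (fun t ht => (hu.parabolicDifferentiableAt ht.1).mul_weight (hE t))
    (fun t ht => hv.parabolicDifferentiableAt ht.1)
    (fun t ht y _ => by
      rw [hu.dT_sub_dXX_mul_weight ht.1 (hE t), hv.dT_sub_dXX ht.1]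
      linarith [hsub t ht y]) x

theorem le_mul_weight_of_supersolution (hu : IsSolutionAfter f T u)
    (hv : IsSolutionAfter (fun _ => g) T v) (hg : LipschitzOnWith K g (Icc 0 1)) (hT : T ≤ t0)
    (hu_cont : ContinuousOn (fun p : ℝ × ℝ => u p.1 p.2) (Icc T t0 ×ˢ univ))
    (hv_cont : ContinuousOn (fun p : ℝ × ℝ => v p.1 p.2) (Icc T t0 ×ˢ univ))
    (hE : Differentiable ℝ E) (huE0 : ∀ t ∈ Icc T t0, ∀ x, 0 ≤ u t x * E t)
    (hv1 : ∀ t ∈ Icc T t0, ∀ x, v t x ≤ 1) (hinit : ∀ x, v T x ≤ u T x * E T)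
    (hsuper : ∀ t ∈ Ioc T t0, ∀ x, u t x * E t < v t x →
      g (u t x * E t) ≤ E t * f t (u t x) + u t x * deriv E t)
    (x : ℝ) : v t0 x ≤ u t0 x * E t0 :=
  le_of_parabolic_comparison (b := fun t y => u t y * E t) hg hT hv_cont
    (hu_cont.mul (hE.continuous.comp continuous_fst).continuousOn) hv1 huE0 hinit
    (fun t ht => hv.parabolicDifferentiableAt ht.1)
    (fun t ht => (hu.parabolicDifferentiableAt ht.1).mul_weight (hE t))
    (fun t ht y hlt => by
      rw [hu.dT_sub_dXX_mul_weight ht.1 (hE t), hv.dT_sub_dXX ht.1]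
      linarith [hsuper t ht y hlt]) x

end IsSolutionAfter

theorem le_mul_of_hasDerivWithinAt_of_div_antitone {g : ℝ → ℝ} {μ : ℝ} (h0 : g 0 = 0)
    (hμ : HasDerivWithinAt g μ (Ici 0) 0)
    (hmono : ∀ v w : ℝ, 0 < v → v ≤ w → w ≤ 1 → g w / w ≤ g v / v) {s : ℝ} (hs : 0 < s)
    (hs1 : s ≤ 1) : g s ≤ μ * s := by
  have hlim : Tendsto (slope g 0) (𝓝[>] 0) (𝓝 μ) :=
    (hasDerivWithinAt_iff_tendsto_slope' (lt_irrefl 0)).1 (hasDerivWithinAt_Ioi_iff_Ici.2 hμ)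
  have hle : g s / s ≤ μ := ge_of_tendsto hlim <| by
    filter_upwards [Ioo_mem_nhdsGT hs] with v hv
    rw [slope_def_field, h0, sub_zero, sub_zero]
    exact hmono v s hv.1 hv.2.le hs1
  rwa [div_le_iff₀ hs] at hle

section DivAntitone

variable {g : ℝ → ℝ} {μ z e s y : ℝ}

theorem mul_le_of_div_antitone (hmono : ∀ v w : ℝ, 0 < v → v ≤ w → w ≤ 1 → g w / w ≤ g v / v)
    (he : 0 < e) (he1 : e ≤ 1) (hs : 0 < s) (hs1 : s ≤ 1) : e * g s ≤ g (s * e) := by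
  have h := hmono (s * e) s (by positivity) (mul_le_of_le_one_right hs.le he1) hs1
  rw [div_le_div_iff₀ hs (by positivity)] at h
  exact le_of_mul_le_mul_right (by linarith) hs

theorem le_mul_of_div_antitone (hmono : ∀ v w : ℝ, 0 < v → v ≤ w → w ≤ 1 → g w / w ≤ g v / v)
    (he : 1 ≤ e) (hs : 0 < s) (hse : s * e ≤ 1) : g (s * e) ≤ e * g s := by
  have h := hmono s (s * e) hs (le_mul_of_one_le_right hs.le he) hse
  rw [div_le_div_iff₀ (by positivity) hs] at h
  exact le_of_mul_le_mul_right (by linarith) hs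

theorem weighted_subsolution_ineq
    (hmono : ∀ v w : ℝ, 0 < v → v ≤ w → w ≤ 1 → g w / w ≤ g v / v) (hlin : g s ≤ μ * s)
    (hz : 0 ≤ z) (he : 0 < e) (he1 : e ≤ 1) (hs : s ∈ Ioc 0 1)
    (hy : y ≤ (1 + z) * g s) : e * y + s * (e * -(μ * z)) ≤ g (s * e) := by
  nlinarith [mul_le_of_div_antitone hmono he he1 hs.1 hs.2, mul_le_mul_of_nonneg_left hy he.le,
    mul_le_mul_of_nonneg_left hlin (mul_nonneg hz he.le)]

theorem weighted_supersolution_ineq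
    (hmono : ∀ v w : ℝ, 0 < v → v ≤ w → w ≤ 1 → g w / w ≤ g v / v) (hlin : g s ≤ μ * s)
    (hz : 0 ≤ z) (he : 1 ≤ e) (hs : 0 < s) (hse : s * e ≤ 1)
    (hy : (1 - z) * g s ≤ y) : g (s * e) ≤ e * y + s * (e * (μ * z)) := by
  have he0 : 0 ≤ e := zero_le_one.trans he
  nlinarith [le_mul_of_div_antitone hmono he hs hse, mul_le_mul_of_nonneg_left hy he0,
    mul_le_mul_of_nonneg_left hlin (mul_nonneg hz he0)]

end DivAntitone

theorem stmt16_general (f : ℝ → ℝ → ℝ) (fm : ℝ → ℝ) (μm : ℝ) (ζ : ℝ → ℝ) (T : ℝ)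
    (hfmC1 : ContDiffOn ℝ 1 fm (Icc (0:ℝ) 1))
    (hfm0 : fm 0 = 0) (hfm1 : fm 1 = 0)
    (hμm : HasDerivWithinAt fm μm (Ici (0:ℝ)) 0)
    (hmono : ∀ v w : ℝ, 0 < v → v ≤ w → w ≤ 1 → fm w / w ≤ fm v / v)
    (hζc : Continuous ζ) (hζ0 : ∀ t : ℝ, 0 ≤ ζ t)
    (hsand : ∀ t : ℝ, ∀ s ∈ Icc (0:ℝ) 1,
      (1 - ζ t) * fm s ≤ f t s ∧ f t s ≤ (1 + ζ t) * fm s)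
    (u v : ℝ → ℝ → ℝ)
    (hu_cont : ContinuousOn (fun p : ℝ × ℝ => u p.1 p.2) (Ici T ×ˢ univ))
    (hu_eq : ∀ t : ℝ, T < t → ∀ x : ℝ,
      DifferentiableAt ℝ (fun s => u s x) t ∧
      DifferentiableAt ℝ (fun y => u t y) x ∧
      DifferentiableAt ℝ (deriv (fun y => u t y)) x ∧
      dT u t x = dXX u t x + f t (u t x))
    (hu_range : ∀ t : ℝ, T ≤ t → ∀ x : ℝ, u t x ∈ Ioo (0:ℝ) 1)
    (hv_cont : ContinuousOn (fun p : ℝ × ℝ => v p.1 p.2) (Ici T ×ˢ univ))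
    (hv_eq : ∀ t : ℝ, T < t → ∀ x : ℝ,
      DifferentiableAt ℝ (fun s => v s x) t ∧
      DifferentiableAt ℝ (fun y => v t y) x ∧
      DifferentiableAt ℝ (deriv (fun y => v t y)) x ∧
      dT v t x = dXX v t x + fm (v t x))
    (hv_range : ∀ t : ℝ, T ≤ t → ∀ x : ℝ, v t x ∈ Icc (0:ℝ) 1)
    (hv_init : ∀ x : ℝ, v T x = u T x) :
    ∀ t : ℝ, T ≤ t → ∀ x : ℝ,
      u t x * Real.exp (-(μm * ∫ τ in T..t, ζ τ)) ≤ v t x ∧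
      v t x ≤ u t x * Real.exp (μm * ∫ τ in T..t, ζ τ) := by
  intro t hT x
  obtain ⟨K, hK⟩ := hfmC1.exists_lipschitzOnWith one_ne_zero (convex_Icc 0 1) isCompact_Icc
  have hu : IsSolutionAfter f T u := hu_eq
  have hv : IsSolutionAfter (fun _ => fm) T v := hv_eq
  have hlin s (hs : s ∈ Ioc (0:ℝ) 1) : fm s ≤ μm * s :=
    le_mul_of_hasDerivWithinAt_of_div_antitone hfm0 hμm hmono hs.1 hs.2
  have hμΘ s (hs : s ∈ Icc T t) : 0 ≤ μm * ∫ τ in T..s, ζ τ :=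
    mul_nonneg (by simpa [hfm1] using hlin 1 ⟨one_pos, le_rfl⟩)
      (intervalIntegral.integral_nonneg hs.1 fun τ _ => hζ0 τ)
  have hΘ s : HasDerivAt (fun s => ∫ τ in T..s, ζ τ) (ζ s) s :=
    (hζc.integral_hasStrictDerivAt T s).hasDerivAt
  have hstrip : Icc T t ×ˢ univ ⊆ Ici T ×ˢ (univ : Set ℝ) := prod_mono_left Icc_subset_Ici_self
  have hu_mem s (hs : s ∈ Icc T t) y : u s y ∈ Ioc 0 1 := Ioo_subset_Ioc_self (hu_range s hs.1 y)
  constructor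
  · have hE s := ((hΘ s).const_mul μm).neg.exp
    have hE1 s (hs : s ∈ Icc T t) := exp_le_one_iff.2 (neg_nonpos.2 (hμΘ s hs))
    refine hu.mul_weight_le_of_subsolution hv hK hT (hu_cont.mono hstrip) (hv_cont.mono hstrip)
      (fun s => (hE s).differentiableAt)
      (fun s hs y => mul_le_one₀ (hu_mem s hs y).2 (exp_pos _).le (hE1 s hs))
      (fun s hs y => (hv_range s hs.1 y).1) (fun y => by simp [hv_init]) (fun s hs y => ?_) x
    replace hs := Ioc_subset_Icc_self hs
    rw [(hE s).deriv]
    exact weighted_subsolution_ineq hmono (hlin _ (hu_mem s hs y)) (hζ0 s) (exp_pos _)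
      (hE1 s hs) (hu_mem s hs y) (hsand s _ (Ioc_subset_Icc_self (hu_mem s hs y))).2
  · have hE s := ((hΘ s).const_mul μm).exp
    refine hu.le_mul_weight_of_supersolution hv hK hT (hu_cont.mono hstrip) (hv_cont.mono hstrip)
      (fun s => (hE s).differentiableAt)
      (fun s hs y => mul_nonneg (hu_mem s hs y).1.le (exp_pos _).le)
      (fun s hs y => (hv_range s hs.1 y).2) (fun y => by simp [hv_init]) (fun s hs y hlt => ?_) x
    replace hs := Ioc_subset_Icc_self hs
    rw [(hE s).deriv]
    exact weighted_supersolution_ineq hmono (hlin _ (hu_mem s hs y)) (hζ0 s)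
      (one_le_exp (hμΘ s hs)) (hu_mem s hs y).1 (hlt.le.trans (hv_range s hs.1 y).2)
      (hsand s _ (Ioc_subset_Icc_self (hu_mem s hs y))).1

/-- Lemma 3.3, comparison lemma: sandwich estimate between a solution of
the time-dependent equation and the solution of the limiting homogeneous equation with
nonlinearity `f₋`, in terms of `∫ ζ`. -/
theorem stmt16 (f : ℝ → ℝ → ℝ) (fm : ℝ → ℝ) (μm : ℝ) (ζ : ℝ → ℝ) (T : ℝ)
    (hfc : Continuous (fun p : ℝ × ℝ => f p.1 p.2))
    (hfC1 : ∀ t : ℝ, ContDiffOn ℝ 1 (f t) (Icc (0:ℝ) 1))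
    (hf0 : ∀ t : ℝ, f t 0 = 0 ∧ f t 1 = 0)
    (hfmC1 : ContDiffOn ℝ 1 fm (Icc (0:ℝ) 1))
    (hfm0 : fm 0 = 0) (hfm1 : fm 1 = 0)
    (hμm : HasDerivWithinAt fm μm (Ici (0:ℝ)) 0)
    (hmono : ∀ v w : ℝ, 0 < v → v ≤ w → w ≤ 1 → fm w / w ≤ fm v / v)
    (hζc : Continuous ζ) (hζ0 : ∀ t : ℝ, 0 ≤ ζ t)
    (hsand : ∀ t : ℝ, ∀ s ∈ Icc (0:ℝ) 1,
      (1 - ζ t) * fm s ≤ f t s ∧ f t s ≤ (1 + ζ t) * fm s)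
    (u v : ℝ → ℝ → ℝ)
    (hu_cont : ContinuousOn (fun p : ℝ × ℝ => u p.1 p.2) (Ici T ×ˢ univ))
    (hu_eq : ∀ t : ℝ, T < t → ∀ x : ℝ,
      DifferentiableAt ℝ (fun s => u s x) t ∧
      DifferentiableAt ℝ (fun y => u t y) x ∧
      DifferentiableAt ℝ (deriv (fun y => u t y)) x ∧
      dT u t x = dXX u t x + f t (u t x))
    (hu_range : ∀ t : ℝ, T ≤ t → ∀ x : ℝ, u t x ∈ Ioo (0:ℝ) 1)
    (hv_cont : ContinuousOn (fun p : ℝ × ℝ => v p.1 p.2) (Ici T ×ˢ univ))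
    (hv_eq : ∀ t : ℝ, T < t → ∀ x : ℝ,
      DifferentiableAt ℝ (fun s => v s x) t ∧
      DifferentiableAt ℝ (fun y => v t y) x ∧
      DifferentiableAt ℝ (deriv (fun y => v t y)) x ∧
      dT v t x = dXX v t x + fm (v t x))
    (hv_range : ∀ t : ℝ, T ≤ t → ∀ x : ℝ, v t x ∈ Icc (0:ℝ) 1)
    (hv_init : ∀ x : ℝ, v T x = u T x) :
    ∀ t : ℝ, T ≤ t → ∀ x : ℝ,
      u t x * Real.exp (-(μm * ∫ τ in T..t, ζ τ)) ≤ v t x ∧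
      v t x ≤ u t x * Real.exp (μm * ∫ τ in T..t, ζ τ) :=
  stmt16_general f fm μm ζ T hfmC1 hfm0 hfm1 hμm hmono hζc hζ0 hsand u v hu_cont hu_eq hu_range
    hv_cont hv_eq hv_range hv_init
end

section
/- Let f₋ : [0,1] → ℝ be of class C² with f₋(0) = f₋(1) = 0, f₋ > 0 on (0,1), and μ₋ := f₋′(0) > 0. Let a, b be real numbers with 2√μ₋ < a ≤ b and, for each c ∈ [a,b], set λ_c := (c − √(c² − 4μ₋))/2 and let φ_c : ℝ → (0,1) be a solution of φ_c″ + c·φ_c′ + f₋(φ_c) = 0 on ℝ with φ_c(−∞) = 1, φ_c(+∞) = 0 and φ_c(x)·e^{λ_c x} → 1 as x → +∞. Then, for every η > 0, there exists A_η ∈ ℝ such that φ_c(x) ≥ (1 − η)·e^{−λ_c x} for all c ∈ [a,b] and all x ≥ A_η; that is, the exponential asymptotics of φ_c at +∞ hold uniformly with respect to c ∈ [a,b]. -/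
open Real Filter Set MeasureTheory

/-!
Beyond a point `x₀` chosen independently of `c ∈ [a, b]`, the function
`ψ_c(x) = θ (e^{-λ_c x} - e^{ε x₀} e^{-(λ_c + ε) x})` is a subsolution of
`φ'' + c φ' + f₋(φ) = 0`. Indeed `f₋(s) ≥ μ₋ s - C s²`, and with `P_c(s) = s² - c s + μ₋`
the linear part of the equation applied to `ψ_c` equals
`-θ e^{ε x₀} P_c(λ_c + ε) e^{-(λ_c + ε) x}`, where `-P_c(λ_c + ε) ≥ ε (√(a² - 4μ₋) - ε) > 0`
uniformly in `c`; for `x₀` large this dominates `C ψ_c² ≤ C e^{-2 λ_c x}`.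
Since `ψ_c(x₀) = 0` and `φ_c e^{λ_c x} → 1 > θ`, a maximum principle on `[x₀, R]`, valid because
`f₋` is one-sided Lipschitz near `0` with a constant `k < c² / 4`, gives `ψ_c ≤ φ_c` on
`[x₀, ∞)`. Finally `ψ_c e^{λ_c x} = θ (1 - e^{-ε (x - x₀)}) → θ`, at a rate independent of `c`.
-/

open Topology

lemma IsLocalMin.nonneg_of_hasDerivAt {f f' : ℝ → ℝ} {x₀ d : ℝ} (hmin : IsLocalMin f x₀)
    (hf : ∀ᶠ x in 𝓝 x₀, HasDerivAt f (f' x) x) (hf' : HasDerivAt f' d x₀) : 0 ≤ d := by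
  by_contra! hd
  have hcrit : f' x₀ = 0 := hmin.hasDerivAt_eq_zero hf.self_of_nhds
  have hsign := eventually_nhdsWithin_sign_eq_of_deriv_neg (f := f') (hf'.deriv ▸ hd) hcrit
  have hright : ∀ᶠ x in 𝓝[>] x₀, f' x < 0 ∧ HasDerivAt f (f' x) x ∧ f x₀ ≤ f x := by
    filter_upwards [nhdsWithin_le_nhds hsign, nhdsWithin_le_nhds hf, nhdsWithin_le_nhds hmin,
      self_mem_nhdsWithin] with x hx hfx hminx (hlt : x₀ < x)
    refine ⟨?_, hfx, hminx⟩
    rwa [sign_neg (sub_neg.2 hlt), sign_eq_neg_one_iff] at hx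
  obtain ⟨u, hu, hsub⟩ := mem_nhdsGT_iff_exists_Ioo_subset.1 hright
  obtain ⟨y, hy⟩ := nonempty_Ioo.2 (mem_Ioi.1 hu)
  have hcont : ContinuousOn f (Icc x₀ y) := by
    intro x hx
    rcases hx.1.eq_or_lt with rfl | hlt
    · exact hf.self_of_nhds.continuousAt.continuousWithinAt
    · exact (hsub ⟨hlt, hx.2.trans_lt hy.2⟩).2.1.continuousAt.continuousWithinAt
  obtain ⟨ξ, hξ, hslope⟩ := exists_hasDerivAt_eq_slope f f' hy.1 hcont
    (fun x hx => (hsub ⟨hx.1, hx.2.trans hy.2⟩).2.1)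
  have hξneg := (hsub ⟨hξ.1, hξ.2.trans hy.2⟩).1
  have hfy := (hsub hy).2.2
  rw [hslope] at hξneg
  exact hξneg.not_ge (div_nonneg (by linarith) (by linarith [hy.1]))

lemma nonneg_of_supersolution {w w' w'' : ℝ → ℝ} {c k x₁ R : ℝ} (hk : 4 * k < c ^ 2)
    (hw : ∀ x, HasDerivAt w (w' x) x) (hw' : ∀ x, HasDerivAt w' (w'' x) x)
    (hsuper : ∀ x ∈ Ioo x₁ R, w x < 0 → w'' x + c * w' x + k * w x ≤ 0)
    (h₁ : 0 ≤ w x₁) (hR : 0 ≤ w R) : ∀ x ∈ Icc x₁ R, 0 ≤ w x := by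
  by_contra! ⟨x₀, hx₀, hneg⟩
  -- the weight removes the drift: `(w e^{c x / 2})'' = (w'' + c w' + c² w / 4) e^{c x / 2}`
  set E : ℝ → ℝ := fun x => exp (c / 2 * x)
  have hE : ∀ x, HasDerivAt E (c / 2 * E x) x := fun x => by
    simpa [E, mul_comm] using ((hasDerivAt_id x).const_mul (c / 2)).exp
  have hv : ∀ x, HasDerivAt (fun x => w x * E x) ((w' x + c / 2 * w x) * E x) x := fun x =>
    ((hw x).mul (hE x)).congr_deriv (by ring)
  have hv' : ∀ x, HasDerivAt (fun x => (w' x + c / 2 * w x) * E x)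
      ((w'' x + c * w' x + c ^ 2 / 4 * w x) * E x) x := fun x =>
    (((hw' x).add ((hw x).const_mul (c / 2))).mul (hE x)).congr_deriv
      (by simp only [Pi.add_apply]; ring)
  obtain ⟨xs, hxs, hmin⟩ := isCompact_Icc.exists_isMinOn (nonempty_Icc.2 (hx₀.1.trans hx₀.2))
    (fun x _ => (hv x).continuousAt.continuousWithinAt)
  have hws : w xs < 0 := by
    have : w xs * E xs ≤ w x₀ * E x₀ := hmin hx₀
    nlinarith [exp_pos (c / 2 * xs), exp_pos (c / 2 * x₀)]
  have hxs' : xs ∈ Ioo x₁ R :=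
    ⟨hxs.1.lt_of_ne (by rintro rfl; linarith), hxs.2.lt_of_ne (by rintro rfl; linarith)⟩
  have h2 := (hmin.isLocalMin (Icc_mem_nhds hxs'.1 hxs'.2)).nonneg_of_hasDerivAt
    (Eventually.of_forall hv) (hv' xs)
  have h2' : 0 ≤ w'' xs + c * w' xs + c ^ 2 / 4 * w xs :=
    nonneg_of_mul_nonneg_left h2 (exp_pos _)
  nlinarith [hsuper xs hxs' hws]

lemma le_of_subsolution {g φ ψ ψ' ψ'' : ℝ → ℝ} {c k x₁ R : ℝ} (hk : 4 * k < c ^ 2)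
    (hφ : ∀ x, DifferentiableAt ℝ φ x ∧ DifferentiableAt ℝ (deriv φ) x ∧
      deriv (deriv φ) x + c * deriv φ x + g (φ x) = 0)
    (hψ : ∀ x, HasDerivAt ψ (ψ' x) x) (hψ' : ∀ x, HasDerivAt ψ' (ψ'' x) x)
    (hsub : ∀ x ∈ Ioo x₁ R, 0 ≤ ψ'' x + c * ψ' x + g (ψ x))
    (hg : ∀ x ∈ Ioo x₁ R, φ x < ψ x → g (ψ x) - g (φ x) ≤ k * (ψ x - φ x))
    (h₁ : ψ x₁ ≤ φ x₁) (hR : ψ R ≤ φ R) : ∀ x ∈ Icc x₁ R, ψ x ≤ φ x := by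
  have key := nonneg_of_supersolution (w := fun x => φ x - ψ x) hk
    (fun x => (hφ x).1.hasDerivAt.sub (hψ x)) (fun x => (hφ x).2.1.hasDerivAt.sub (hψ' x))
    (fun x hx hneg => by
      have := hsub x hx
      have := hg x hx (sub_neg.1 hneg)
      linarith [(hφ x).2.2])
    (sub_nonneg.2 h₁) (sub_nonneg.2 hR)
  exact fun x hx => sub_nonneg.1 (key x hx)

lemma exists_quadratic_lower_bound {f : ℝ → ℝ} {μ : ℝ} (hf : ContDiffOn ℝ 2 f (Icc 0 1))
    (hf0 : f 0 = 0) (hμ : HasDerivWithinAt f μ (Ici 0) 0) :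
    ∃ C, 0 ≤ C ∧ ∀ s ∈ Icc (0:ℝ) 1, μ * s - C * s ^ 2 ≤ f s := by
  obtain ⟨C, hC⟩ := exists_taylor_mean_remainder_bound (n := 1) zero_le_one hf
  have hμ' : derivWithin f (Icc 0 1) 0 = μ :=
    (hμ.mono Icc_subset_Ici_self).derivWithin (uniqueDiffOn_Icc one_pos 0 ⟨le_rfl, zero_le_one⟩)
  refine ⟨max C 0, le_max_right _ _, fun s hs => ?_⟩
  have h := hC s hs
  norm_num [taylorWithinEval_succ, taylor_within_zero_eval, hμ', hf0] at h
  have := (abs_le.1 h).1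
  nlinarith [le_max_left C 0, sq_nonneg s]

lemma exists_sub_le_mul_sub_near_zero {f : ℝ → ℝ} {μ k : ℝ} (hf : ContDiffOn ℝ 1 f (Icc 0 1))
    (hμ : HasDerivWithinAt f μ (Ici 0) 0) (hk : μ < k) :
    ∃ δ, 0 < δ ∧ δ ≤ 1 ∧ ∀ s ∈ Icc 0 δ, ∀ t ∈ Icc 0 δ, s ≤ t → f t - f s ≤ k * (t - s) := by
  have hU : UniqueDiffOn ℝ (Icc (0:ℝ) 1) := uniqueDiffOn_Icc one_pos
  have h0 : (0:ℝ) ∈ Icc 0 1 := ⟨le_rfl, zero_le_one⟩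
  have hμ' : derivWithin f (Icc 0 1) 0 = μ :=
    (hμ.mono Icc_subset_Ici_self).derivWithin (hU 0 h0)
  have hev : ∀ᶠ s in 𝓝[≥] 0, derivWithin f (Icc 0 1) s < k := by
    rw [← nhdsWithin_Icc_eq_nhdsGE one_pos]
    exact (hf.continuousOn_derivWithin hU le_rfl 0 h0).eventually (hμ' ▸ gt_mem_nhds hk)
  obtain ⟨u, hu, hsub⟩ := mem_nhdsGE_iff_exists_Icc_subset.1 hev
  refine ⟨min u 1, lt_min hu one_pos, min_le_right _ _, ?_⟩
  have hδ : Icc 0 (min u 1) ⊆ Icc 0 1 := Icc_subset_Icc_right (min_le_right _ _)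
  refine (convex_Icc _ _).image_sub_le_mul_sub_of_deriv_le (hf.continuousOn.mono hδ) ?_ ?_
  all_goals
    rw [interior_Icc]
    intro x hx
    have hx1 : Icc 0 1 ∈ 𝓝 x := Icc_mem_nhds hx.1 (hx.2.trans_le (min_le_right _ _))
  · exact ((hf.differentiableOn one_ne_zero x (hδ (Ioo_subset_Icc_self hx))).differentiableAt
      hx1).differentiableWithinAt
  · rw [← derivWithin_of_mem_nhds hx1]
    exact (hsub ⟨hx.1.le, hx.2.le.trans (min_le_left _ _)⟩).le

noncomputable def frontRate (μ c : ℝ) : ℝ := (c - √(c ^ 2 - 4 * μ)) / 2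

section frontRate

variable {μ c : ℝ}

lemma frontRate_sq_sub_mul_add (h : 4 * μ ≤ c ^ 2) :
    frontRate μ c ^ 2 - c * frontRate μ c + μ = 0 := by
  have := sq_sqrt (sub_nonneg.2 h)
  unfold frontRate
  linear_combination this / 4

lemma frontRate_add_sq_sub_mul_add (h : 4 * μ ≤ c ^ 2) (ε : ℝ) :
    (frontRate μ c + ε) ^ 2 - c * (frontRate μ c + ε) + μ = -(ε * (√(c ^ 2 - 4 * μ) - ε)) := by
  have := sq_sqrt (sub_nonneg.2 h)
  unfold frontRate
  linear_combination this / 4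

lemma frontRate_eq_div (h : 4 * μ ≤ c ^ 2) (hc : 0 < c) :
    frontRate μ c = 2 * μ / (c + √(c ^ 2 - 4 * μ)) := by
  have := sq_sqrt (sub_nonneg.2 h)
  have hpos : 0 < c + √(c ^ 2 - 4 * μ) := by positivity
  unfold frontRate
  field_simp
  linear_combination -this

lemma frontRate_pos (hμ : 0 < μ) (h : 4 * μ ≤ c ^ 2) (hc : 0 < c) : 0 < frontRate μ c := by
  rw [frontRate_eq_div h hc]
  positivity

lemma frontRate_anti {c' : ℝ} (hμ : 0 ≤ μ) (h : 4 * μ ≤ c ^ 2) (hc : 0 < c) (hcc' : c ≤ c') :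
    frontRate μ c' ≤ frontRate μ c := by
  have h' : 4 * μ ≤ c' ^ 2 := h.trans (pow_le_pow_left₀ hc.le hcc' 2)
  rw [frontRate_eq_div h hc, frontRate_eq_div h' (hc.trans_le hcc')]
  gcongr

end frontRate

lemma tendsto_exp_neg_mul_sub_atTop {s : ℝ} (hs : 0 < s) (x₀ : ℝ) :
    Tendsto (fun x => exp (-(s * (x - x₀)))) atTop (𝓝 0) := by
  have : Tendsto (fun x => s * (x - x₀)) atTop atTop :=
    (tendsto_atTop_add_const_right _ (-x₀) tendsto_id).const_mul_atTop hs
  exact tendsto_exp_neg_atTop_nhds_zero.comp this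

lemma hasDerivAt_exp_sub_mul (α s x : ℝ) :
    HasDerivAt (fun x => exp (α - s * x)) (-s * exp (α - s * x)) x := by
  simpa [mul_comm] using (((hasDerivAt_id x).const_mul s).const_sub α).exp

noncomputable def frontSubsolution (θ l ε x₀ x : ℝ) : ℝ :=
  θ * (exp (-(l * x)) - exp (ε * x₀ - (l + ε) * x))

section frontSubsolution

variable {θ l ε x₀ : ℝ}

lemma hasDerivAt_frontSubsolution (x : ℝ) :
    HasDerivAt (frontSubsolution θ l ε x₀)
      (θ * (-l * exp (-(l * x)) + (l + ε) * exp (ε * x₀ - (l + ε) * x))) x := by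
  have h := ((hasDerivAt_exp_sub_mul 0 l x).sub
    (hasDerivAt_exp_sub_mul (ε * x₀) (l + ε) x)).const_mul θ
  simp only [zero_sub] at h
  exact h.congr_deriv (by ring)

lemma hasDerivAt_deriv_frontSubsolution (x : ℝ) :
    HasDerivAt (fun x => θ * (-l * exp (-(l * x)) + (l + ε) * exp (ε * x₀ - (l + ε) * x)))
      (θ * (l ^ 2 * exp (-(l * x)) - (l + ε) ^ 2 * exp (ε * x₀ - (l + ε) * x))) x := by
  have h := (((hasDerivAt_exp_sub_mul 0 l x).const_mul (-l)).add
    ((hasDerivAt_exp_sub_mul (ε * x₀) (l + ε) x).const_mul (l + ε))).const_mul θ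
  simp only [zero_sub] at h
  exact h.congr_deriv (by ring)

lemma frontSubsolution_eq (x : ℝ) :
    frontSubsolution θ l ε x₀ x = θ * (1 - exp (-(ε * (x - x₀)))) * exp (-(l * x)) := by
  rw [frontSubsolution, show ε * x₀ - (l + ε) * x = -(ε * (x - x₀)) + -(l * x) by ring, exp_add]
  ring

lemma frontSubsolution_self : frontSubsolution θ l ε x₀ x₀ = 0 := by
  simp [frontSubsolution_eq]

lemma frontSubsolution_nonneg (hθ : 0 ≤ θ) (hε : 0 ≤ ε) {x : ℝ} (hx : x₀ ≤ x) :
    0 ≤ frontSubsolution θ l ε x₀ x := by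
  rw [frontSubsolution_eq]
  have : exp (-(ε * (x - x₀))) ≤ 1 := exp_le_one_iff.2 (by nlinarith)
  have := exp_pos (-(l * x))
  have : 0 ≤ 1 - exp (-(ε * (x - x₀))) := by linarith
  positivity

lemma frontSubsolution_le (hθ : 0 ≤ θ) (x : ℝ) :
    frontSubsolution θ l ε x₀ x ≤ θ * exp (-(l * x)) := by
  have := exp_pos (ε * x₀ - (l + ε) * x)
  unfold frontSubsolution
  nlinarith

lemma one_sub_mul_exp_le_frontSubsolution {η x : ℝ} (hη : 0 ≤ η)
    (hx : exp (-(ε * (x - x₀))) ≤ η ^ 2) :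
    (1 - η) * exp (-(l * x)) ≤ frontSubsolution (1 + η)⁻¹ l ε x₀ x := by
  rw [frontSubsolution_eq]
  gcongr
  rw [le_inv_mul_iff₀ (by positivity)]
  nlinarith

lemma frontSubsolution_isSubsolution {g : ℝ → ℝ} {μ C δ c : ℝ}
    (hg : ∀ s ∈ Icc 0 δ, μ * s - C * s ^ 2 ≤ g s) (hC0 : 0 ≤ C)
    (hC : C ≤ θ * exp (ε * x₀) * -((l + ε) ^ 2 - c * (l + ε) + μ))
    (hl : l ^ 2 - c * l + μ = 0) (hεl : ε ≤ l) (hθ : 0 ≤ θ) (hθ1 : θ ≤ 1) (hε : 0 ≤ ε)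
    (hx₀ : 0 ≤ x₀) {x : ℝ} (hx : x₀ ≤ x) (hδ : frontSubsolution θ l ε x₀ x ≤ δ) :
    0 ≤ θ * (l ^ 2 * exp (-(l * x)) - (l + ε) ^ 2 * exp (ε * x₀ - (l + ε) * x)) +
      c * (θ * (-l * exp (-(l * x)) + (l + ε) * exp (ε * x₀ - (l + ε) * x))) +
      g (frontSubsolution θ l ε x₀ x) := by
  set ψ := frontSubsolution θ l ε x₀ x
  have hψ0 : 0 ≤ ψ := frontSubsolution_nonneg hθ hε hx
  have hψl : ψ ≤ exp (-(l * x)) :=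
    (frontSubsolution_le hθ x).trans (mul_le_of_le_one_left (exp_pos _).le hθ1)
  have hsq : ψ ^ 2 ≤ exp (-((l + ε) * x)) := by
    calc ψ ^ 2 ≤ exp (-(l * x)) ^ 2 := pow_le_pow_left₀ hψ0 hψl 2
      _ = exp (-(2 * l * x)) := by rw [← exp_nat_mul]; ring_nf
      _ ≤ exp (-((l + ε) * x)) := exp_le_exp.2 (by nlinarith)
  have hlin : θ * (l ^ 2 * exp (-(l * x)) - (l + ε) ^ 2 * exp (ε * x₀ - (l + ε) * x)) +
      c * (θ * (-l * exp (-(l * x)) + (l + ε) * exp (ε * x₀ - (l + ε) * x))) + μ * ψ =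
      θ * exp (ε * x₀) * -((l + ε) ^ 2 - c * (l + ε) + μ) * exp (-((l + ε) * x)) := by
    simp only [ψ, frontSubsolution, sub_eq_add_neg (ε * x₀), exp_add]
    linear_combination θ * exp (-(l * x)) * hl
  have := mul_le_mul_of_nonneg_right hC (exp_pos (-((l + ε) * x))).le
  nlinarith [hg ψ ⟨hψ0, hδ⟩, mul_le_mul_of_nonneg_left hsq hC0]

end frontSubsolution

lemma frontSubsolution_le_of_solution {g φ : ℝ → ℝ} {μ C δ k c θ l ε x₀ : ℝ}
    (hφ0 : ∀ x, 0 < φ x)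
    (hφ : ∀ x, DifferentiableAt ℝ φ x ∧ DifferentiableAt ℝ (deriv φ) x ∧
      deriv (deriv φ) x + c * deriv φ x + g (φ x) = 0)
    (hlim : Tendsto (fun x => φ x * exp (l * x)) atTop (𝓝 1))
    (hg : ∀ s ∈ Icc 0 δ, μ * s - C * s ^ 2 ≤ g s) (hC0 : 0 ≤ C)
    (hgk : ∀ s ∈ Icc 0 δ, ∀ t ∈ Icc 0 δ, s ≤ t → g t - g s ≤ k * (t - s)) (hk : 4 * k < c ^ 2)
    (hC : C ≤ θ * exp (ε * x₀) * -((l + ε) ^ 2 - c * (l + ε) + μ))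
    (hl : l ^ 2 - c * l + μ = 0) (hε : 0 ≤ ε) (hεl : ε ≤ l) (hθ : 0 ≤ θ) (hθ1 : θ < 1)
    (hx₀ : 0 ≤ x₀) (hδ : exp (-(l * x₀)) ≤ δ) :
    ∀ x ≥ x₀, frontSubsolution θ l ε x₀ x ≤ φ x := by
  intro x hx
  have hψδ : ∀ y ≥ x₀, frontSubsolution θ l ε x₀ y ≤ δ := fun y hy => calc
    frontSubsolution θ l ε x₀ y ≤ θ * exp (-(l * y)) := frontSubsolution_le hθ y
    _ ≤ exp (-(l * y)) := mul_le_of_le_one_left (exp_pos _).le hθ1.le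
    _ ≤ exp (-(l * x₀)) := exp_le_exp.2 (by nlinarith)
    _ ≤ δ := hδ
  obtain ⟨R, hRθ, hxR⟩ :=
    ((hlim.eventually (eventually_ge_nhds hθ1)).and (eventually_ge_atTop x)).exists
  refine le_of_subsolution hk hφ hasDerivAt_frontSubsolution hasDerivAt_deriv_frontSubsolution
    (fun y hy => frontSubsolution_isSubsolution hg hC0 hC hl hεl hθ hθ1.le hε hx₀ hy.1.le
      (hψδ y hy.1.le))
    (fun y hy hlt => hgk _ ⟨(hφ0 y).le, hlt.le.trans (hψδ y hy.1.le)⟩ _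
      ⟨(hφ0 y).le.trans hlt.le, hψδ y hy.1.le⟩ hlt.le)
    (frontSubsolution_self ▸ (hφ0 x₀).le) ?_ x ⟨hx, hxR⟩
  calc frontSubsolution θ l ε x₀ R ≤ θ * exp (-(l * R)) := frontSubsolution_le hθ R
    _ ≤ φ R * exp (l * R) * exp (-(l * R)) := by gcongr
    _ = φ R := by rw [mul_assoc, ← exp_add, add_neg_cancel, exp_zero, mul_one]

lemma exists_frontSubsolution_le_uniform {g : ℝ → ℝ} {φ : ℝ → ℝ → ℝ} {μ C δ k a b θ : ℝ}
    (hμ : 0 < μ) (ha0 : 0 < a) (ha : 4 * μ < a ^ 2) (hab : a ≤ b) (hk : 4 * k < a ^ 2)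
    (hg : ∀ s ∈ Icc 0 δ, μ * s - C * s ^ 2 ≤ g s) (hC0 : 0 ≤ C) (hδ : 0 < δ)
    (hgk : ∀ s ∈ Icc 0 δ, ∀ t ∈ Icc 0 δ, s ≤ t → g t - g s ≤ k * (t - s))
    (hθ : 0 < θ) (hθ1 : θ < 1)
    (hφ : ∀ c ∈ Icc a b, (∀ x, 0 < φ c x) ∧
      (∀ x, DifferentiableAt ℝ (φ c) x ∧ DifferentiableAt ℝ (deriv (φ c)) x ∧
        deriv (deriv (φ c)) x + c * deriv (φ c) x + g (φ c x) = 0) ∧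
      Tendsto (fun x => φ c x * exp (frontRate μ c * x)) atTop (𝓝 1)) :
    ∃ ε > 0, ∃ x₀, ∀ c ∈ Icc a b, ∀ x ≥ x₀, frontSubsolution θ (frontRate μ c) ε x₀ x ≤ φ c x := by
  have hsq : ∀ c ∈ Icc a b, a ^ 2 ≤ c ^ 2 := fun c hc => pow_le_pow_left₀ ha0.le hc.1 2
  have hlb : 0 < frontRate μ b :=
    frontRate_pos hμ ((hsq b ⟨hab, le_rfl⟩).trans' ha.le) (ha0.trans_le hab)
  set D := √(a ^ 2 - 4 * μ)
  have hD : 0 < D := sqrt_pos.2 (by linarith)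
  -- `ε ≤ λ_b ≤ λ_c` gives `λ_c + ε ≤ 2 λ_c`; `ε ≤ D / 2` gives `P_c(λ_c + ε) ≤ -ε (D - ε) < 0`
  set ε := min (frontRate μ b) (D / 2)
  have hε : 0 < ε := lt_min hlb (by linarith)
  have hq : 0 < ε * (D - ε) := mul_pos hε (by linarith [min_le_right (frontRate μ b) (D / 2)])
  have hdecay : ∀ᶠ x in atTop, exp (-(frontRate μ b * x)) ≤ δ := by
    simpa using (tendsto_exp_neg_mul_sub_atTop hlb 0).eventually (eventually_le_nhds hδ)
  have hgrowth : ∀ᶠ x in atTop, C ≤ θ * exp (ε * x) * (ε * (D - ε)) :=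
    (((tendsto_exp_atTop.comp (tendsto_id.const_mul_atTop hε)).const_mul_atTop hθ).atTop_mul_const
      hq).eventually_ge_atTop C
  obtain ⟨x₀, hx₀, hx₀δ, hx₀C⟩ := ((eventually_ge_atTop 0).and (hdecay.and hgrowth)).exists
  refine ⟨ε, hε, x₀, fun c hc => ?_⟩
  obtain ⟨hφ0, hode, hlim⟩ := hφ c hc
  have hc2 : 4 * μ ≤ c ^ 2 := by linarith [hsq c hc]
  have hlc : frontRate μ b ≤ frontRate μ c := frontRate_anti hμ.le hc2 (ha0.trans_le hc.1) hc.2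
  have hC : C ≤
      θ * exp (ε * x₀) * -((frontRate μ c + ε) ^ 2 - c * (frontRate μ c + ε) + μ) := by
    rw [frontRate_add_sq_sub_mul_add hc2, neg_neg]
    exact hx₀C.trans (by gcongr; exact sqrt_le_sqrt (by linarith [hsq c hc]))
  exact frontSubsolution_le_of_solution hφ0 hode hlim hg hC0 hgk (by linarith [hsq c hc]) hC
    (frontRate_sq_sub_mul_add hc2) hε.le ((min_le_left _ _).trans hlc) hθ.le hθ1 hx₀
    ((exp_le_exp.2 (neg_le_neg (mul_le_mul_of_nonneg_right hlc hx₀))).trans hx₀δ)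

theorem stmt18_general (fm : ℝ → ℝ) (μm : ℝ)
    (hfmC2 : ContDiffOn ℝ 2 fm (Icc (0:ℝ) 1))
    (hfm0 : fm 0 = 0)
    (hμm : HasDerivWithinAt fm μm (Ici (0:ℝ)) 0) (hμmpos : 0 < μm)
    (a b : ℝ) (hab : a ≤ b) (ha : 2 * Real.sqrt μm < a)
    (φ : ℝ → ℝ → ℝ)
    (hφ : ∀ c ∈ Icc a b,
      (∀ x : ℝ, φ c x ∈ Ioo (0:ℝ) 1) ∧
      (∀ x : ℝ, DifferentiableAt ℝ (φ c) x ∧ DifferentiableAt ℝ (deriv (φ c)) x ∧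
        deriv (deriv (φ c)) x + c * deriv (φ c) x + fm (φ c x) = 0) ∧
      Tendsto (φ c) atBot (nhds 1) ∧ Tendsto (φ c) atTop (nhds 0) ∧
      Tendsto (fun x => φ c x * Real.exp ((c - Real.sqrt (c ^ 2 - 4 * μm)) / 2 * x))
        atTop (nhds 1)) :
    ∀ η > (0:ℝ), ∃ A : ℝ, ∀ c ∈ Icc a b, ∀ x ≥ A,
      (1 - η) * Real.exp (-((c - Real.sqrt (c ^ 2 - 4 * μm)) / 2 * x)) ≤ φ c x := by
  have ha0 : 0 < a := (by positivity : 0 ≤ 2 * √μm).trans_lt ha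
  have ha2 : 4 * μm < a ^ 2 := by nlinarith [lt_sq_of_sqrt_lt (show √μm < a / 2 by linarith)]
  obtain ⟨C, hC0, hlower⟩ := exists_quadratic_lower_bound hfmC2 hfm0 hμm
  -- any `k` strictly between `μ₋` and `a² / 4` would do
  obtain ⟨δ, hδ0, hδ1, hlip⟩ := exists_sub_le_mul_sub_near_zero (hfmC2.of_le one_le_two) hμm
    (show μm < (4 * μm + a ^ 2) / 8 by linarith)
  intro η hη
  obtain ⟨ε, hε, x₀, hsub⟩ := exists_frontSubsolution_le_uniform hμmpos ha0 ha2 hab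
    (show 4 * ((4 * μm + a ^ 2) / 8) < a ^ 2 by linarith)
    (fun s hs => hlower s ⟨hs.1, hs.2.trans hδ1⟩) hC0 hδ0 hlip
    (inv_pos.2 (by linarith : 0 < 1 + η)) (inv_lt_one_of_one_lt₀ (by linarith))
    (fun c hc => ⟨fun x => ((hφ c hc).1 x).1, (hφ c hc).2.1, (hφ c hc).2.2.2.2⟩)
  obtain ⟨A, hA⟩ := eventually_atTop.1 ((eventually_ge_atTop x₀).and
    ((tendsto_exp_neg_mul_sub_atTop hε x₀).eventually (eventually_le_nhds (pow_pos hη 2))))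
  exact ⟨A, fun c hc x hx => (one_sub_mul_exp_le_frontSubsolution hη.le (hA x hx).2).trans
    (hsub c hc x (hA x hx).1)⟩

/-- claim (2.16): uniform exponential asymptotics, with respect to the
speed `c ∈ [a,b]`, of the supercritical traveling-front profiles `φ_c` at `+∞`. -/
theorem stmt18 (fm : ℝ → ℝ) (μm : ℝ)
    (hfmC2 : ContDiffOn ℝ 2 fm (Icc (0:ℝ) 1))
    (hfm0 : fm 0 = 0) (hfm1 : fm 1 = 0)
    (hfmpos : ∀ v ∈ Ioo (0:ℝ) 1, 0 < fm v)
    (hμm : HasDerivWithinAt fm μm (Ici (0:ℝ)) 0) (hμmpos : 0 < μm)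
    (a b : ℝ) (hab : a ≤ b) (ha : 2 * Real.sqrt μm < a)
    (φ : ℝ → ℝ → ℝ)
    (hφ : ∀ c ∈ Icc a b,
      (∀ x : ℝ, φ c x ∈ Ioo (0:ℝ) 1) ∧
      (∀ x : ℝ, DifferentiableAt ℝ (φ c) x ∧ DifferentiableAt ℝ (deriv (φ c)) x ∧
        deriv (deriv (φ c)) x + c * deriv (φ c) x + fm (φ c x) = 0) ∧
      Tendsto (φ c) atBot (nhds 1) ∧ Tendsto (φ c) atTop (nhds 0) ∧
      Tendsto (fun x => φ c x * Real.exp ((c - Real.sqrt (c ^ 2 - 4 * μm)) / 2 * x))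
        atTop (nhds 1)) :
    ∀ η > (0:ℝ), ∃ A : ℝ, ∀ c ∈ Icc a b, ∀ x ≥ A,
      (1 - η) * Real.exp (-((c - Real.sqrt (c ^ 2 - 4 * μm)) / 2 * x)) ≤ φ c x :=
  stmt18_general fm μm hfmC2 hfm0 hμm hμmpos a b hab ha φ hφ
end

section
/- Let μ₋ > 0 and μ₊ > 0. For real numbers c₋ and c₊, the following two conditions are equivalent: (i) c₋ ≥ 2√μ₋ and c₊ ≥ κ + μ₊/κ, where κ := min(√μ₊, (c₋ − √(c₋² − 4μ₋))/2); (ii) there exist κ₋ ∈ (0, √μ₋] and κ₊ ∈ (0, min(κ₋, √μ₊)] such that c₋ = κ₋ + μ₋/κ₋ and c₊ = κ₊ + μ₊/κ₊. Moreover, if μ₊ > μ₋, then any pair (c₋, c₊) satisfying these conditions has c₊ > c₋. -/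
open Real Filter Set MeasureTheory

private lemma amgm' (μ k : ℝ) (hμ : 0 < μ) (hk : 0 < k) : 2 * Real.sqrt μ ≤ k + μ / k := by
  have hm : (Real.sqrt μ) ^ 2 = μ := Real.sq_sqrt hμ.le
  have key : k + μ / k - 2 * Real.sqrt μ = (Real.sqrt μ - k) ^ 2 / k := by
    field_simp
    nlinarith [hm]
  nlinarith [div_nonneg (sq_nonneg (Real.sqrt μ - k)) hk.le]

private lemma root_spec' (μ c : ℝ) (hμ : 0 < μ) (hc : 2 * Real.sqrt μ ≤ c) :
    0 < (c - Real.sqrt (c ^ 2 - 4 * μ)) / 2 ∧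
    (c - Real.sqrt (c ^ 2 - 4 * μ)) / 2 ≤ Real.sqrt μ ∧
    c = (c - Real.sqrt (c ^ 2 - 4 * μ)) / 2 + μ / ((c - Real.sqrt (c ^ 2 - 4 * μ)) / 2) := by
  have hm : (Real.sqrt μ) ^ 2 = μ := Real.sq_sqrt hμ.le
  have hm0 : 0 < Real.sqrt μ := Real.sqrt_pos.mpr hμ
  have hc0 : 0 < c := lt_of_lt_of_le (by linarith) hc
  have hd : 0 ≤ c ^ 2 - 4 * μ := by nlinarith
  set s := Real.sqrt (c ^ 2 - 4 * μ) with hsdef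
  have hs : s ^ 2 = c ^ 2 - 4 * μ := Real.sq_sqrt hd
  have hs0 : 0 ≤ s := Real.sqrt_nonneg _
  have hsc : s < c := by nlinarith
  have hk0 : 0 < (c - s) / 2 := by linarith
  have hsm : c - 2 * Real.sqrt μ ≤ s := by nlinarith
  have hμk : μ / ((c - s) / 2) = c - (c - s) / 2 := by
    rw [div_eq_iff hk0.ne']
    linear_combination ((1:ℝ)/4) * hs
  exact ⟨hk0, by linarith, by rw [hμk]; ring⟩

private lemma inv_spec' (μ k : ℝ) (hμ : 0 < μ) (hk : 0 < k) (hk2 : k ≤ Real.sqrt μ) :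
    (k + μ / k - Real.sqrt ((k + μ / k) ^ 2 - 4 * μ)) / 2 = k := by
  have hm : (Real.sqrt μ) ^ 2 = μ := Real.sq_sqrt hμ.le
  have h1 : (k + μ / k) ^ 2 - 4 * μ = (μ / k - k) ^ 2 := by
    field_simp
    ring
  have hkk : k ^ 2 ≤ μ := by nlinarith [Real.sqrt_nonneg μ]
  have h2 : 0 ≤ μ / k - k := by
    rw [sub_nonneg, le_div_iff₀ hk]
    nlinarith
  rw [h1, Real.sqrt_sq h2]
  field_simp
  ring

private lemma mono_le' (μ a b : ℝ) (hμ : 0 < μ) (ha : 0 < a) (hab : a ≤ b) (hb : b ≤ Real.sqrt μ) :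
    b + μ / b ≤ a + μ / a := by
  have hm : (Real.sqrt μ) ^ 2 = μ := Real.sq_sqrt hμ.le
  have hb0 : 0 < b := lt_of_lt_of_le ha hab
  have key : a + μ / a - (b + μ / b) = (b - a) * (μ - a * b) / (a * b) := by
    field_simp
    ring
  have hab2 : a * b ≤ μ := by nlinarith [Real.sqrt_nonneg μ]
  nlinarith [div_nonneg (mul_nonneg (sub_nonneg.mpr hab) (sub_nonneg.mpr hab2)) (mul_pos ha hb0).le]

private lemma mono_lt' (μ a b : ℝ) (hμ : 0 < μ) (ha : 0 < a) (hab : a < b) (hb : b ≤ Real.sqrt μ) :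
    b + μ / b < a + μ / a := by
  have hm : (Real.sqrt μ) ^ 2 = μ := Real.sq_sqrt hμ.le
  have hb0 : 0 < b := ha.trans hab
  have key : a + μ / a - (b + μ / b) = (b - a) * (μ - a * b) / (a * b) := by
    field_simp
    ring
  have hab2 : a * b < μ := by nlinarith [Real.sqrt_nonneg μ]
  nlinarith [div_pos (mul_pos (sub_pos.mpr hab) (sub_pos.mpr hab2)) (mul_pos ha hb0)]


/-- equivalence between the two descriptions of admissible asymptotic
speeds (via speeds, or via exponential decay rates), and strict global acceleration
when `μ₊ > μ₋`. -/
theorem stmt19 (μm μp : ℝ) (hμm : 0 < μm) (hμp : 0 < μp) :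
    (∀ cm cp : ℝ,
      (2 * Real.sqrt μm ≤ cm ∧
        min (Real.sqrt μp) ((cm - Real.sqrt (cm ^ 2 - 4 * μm)) / 2) +
          μp / min (Real.sqrt μp) ((cm - Real.sqrt (cm ^ 2 - 4 * μm)) / 2) ≤ cp) ↔
      (∃ km kp : ℝ, km ∈ Ioc (0:ℝ) (Real.sqrt μm) ∧
          kp ∈ Ioc (0:ℝ) (min km (Real.sqrt μp)) ∧
          cm = km + μm / km ∧ cp = kp + μp / kp)) ∧
    (μm < μp → ∀ cm cp : ℝ,
      (2 * Real.sqrt μm ≤ cm ∧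
        min (Real.sqrt μp) ((cm - Real.sqrt (cm ^ 2 - 4 * μm)) / 2) +
          μp / min (Real.sqrt μp) ((cm - Real.sqrt (cm ^ 2 - 4 * μm)) / 2) ≤ cp) →
      cm < cp) := by
  constructor
  · intro cm cp
    constructor
    · rintro ⟨h1, h2⟩
      obtain ⟨hK0, hK1, hKc⟩ := root_spec' μm cm hμm h1
      set K := (cm - Real.sqrt (cm ^ 2 - 4 * μm)) / 2 with hKdef
      set κ := min (Real.sqrt μp) K with hκdef
      have hκ0 : 0 < κ := lt_min (Real.sqrt_pos.mpr hμp) hK0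
      have hκp : κ ≤ Real.sqrt μp := min_le_left _ _
      have hcp2 : 2 * Real.sqrt μp ≤ cp := le_trans (amgm' μp κ hμp hκ0) h2
      obtain ⟨hp0, hp1, hpc⟩ := root_spec' μp cp hμp hcp2
      set kp := (cp - Real.sqrt (cp ^ 2 - 4 * μp)) / 2 with hpdef
      have hkpκ : kp ≤ κ := by
        by_contra hcon
        push_neg at hcon
        have := mono_lt' μp κ kp hμp hκ0 hcon hp1
        linarith [h2, hpc.symm.le]
      refine ⟨K, kp, ⟨hK0, hK1⟩, ⟨hp0, le_min (hkpκ.trans (min_le_right _ _)) hp1⟩, hKc, hpc⟩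
    · rintro ⟨km, kp, ⟨hkm0, hkm1⟩, ⟨hkp0, hkp1⟩, hcm, hcp⟩
      have hroot : (cm - Real.sqrt (cm ^ 2 - 4 * μm)) / 2 = km := by
        rw [hcm]; exact inv_spec' μm km hμm hkm0 hkm1
      have h1 : 2 * Real.sqrt μm ≤ cm := by rw [hcm]; exact amgm' μm km hμm hkm0
      refine ⟨h1, ?_⟩
      rw [hroot]
      set κ := min (Real.sqrt μp) km with hκdef
      have hκ0 : 0 < κ := lt_min (Real.sqrt_pos.mpr hμp) hkm0
      have hkpκ : kp ≤ κ := by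
        rcases le_min_iff.mp hkp1 with ⟨ha, hb⟩
        exact le_min hb ha
      rw [hcp]
      exact mono_le' μp kp κ hμp hkp0 hkpκ (min_le_left _ _)
  · intro hμ cm cp ⟨h1, h2⟩
    obtain ⟨hK0, hK1, hKc⟩ := root_spec' μm cm hμm h1
    set K := (cm - Real.sqrt (cm ^ 2 - 4 * μm)) / 2 with hKdef
    have hKp : K < Real.sqrt μp := lt_of_le_of_lt hK1 (Real.sqrt_lt_sqrt hμm.le hμ)
    have hκ : min (Real.sqrt μp) K = K := min_eq_right hKp.le
    rw [hκ] at h2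
    have hdiv : μm / K < μp / K := by
      exact div_lt_div_of_pos_right hμ hK0
    calc cm = K + μm / K := hKc
      _ < K + μp / K := by linarith
      _ ≤ cp := h2
end
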